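/- arXiv:2508.04496 — 5 statements merged into one kernel-verified Lean document; each statement's English description precedes it below -/
import Mathlib

section
/- Let k ≥ 2, let 0 < p < k, let Ω ⊂ ℝ^k be a bounded open set, let B ⊂ ℝ^k be closed, and let A ⊂ Ω be a compact p-admissible set with Lebesgue measure m(A) = 0. Let b > 0 and let g(t) = (log(1/t))^b for 0 < t ≤ 1/2. Suppose u is a subharmonic function on Ω ∖ B such that for some α ∈ (0, 1/2), u(x) ≤ g(dist(x, A ∪ B)) for all x ∈ Ω with 0 < dist(x, A ∪ B) < α. Then for every a > 1 there exist constants C > 0 and τ₁ > 0 such that u(x) ≤ a·(log(C/dist(x,B)))^b for all x ∈ Ω with 0 < dist(x,B) < τ₁. -/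
set_option maxHeartbeats 1000000

open MeasureTheory Metric Set Filter

noncomputable section

lemma infDist_union_min' {α : Type*} [MetricSpace α] (x : α) {s t : Set α}
    (hs : s.Nonempty) (ht : t.Nonempty) :
    Metric.infDist x (s ∪ t) = min (Metric.infDist x s) (Metric.infDist x t) := by
  have h1 := Metric.infEdist_ne_top (x := x) hs
  have h2 := Metric.infEdist_ne_top (x := x) ht
  rw [Metric.infDist, EMetric.infEdist_union]
  rcases le_total (Metric.infEDist x s) (Metric.infEDist x t) with h | h
  · have h3 : Metric.infDist x s ≤ Metric.infDist x t := ENNReal.toReal_mono h2 h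
    rw [inf_eq_left.2 h, min_eq_left h3]; rfl
  · have h3 : Metric.infDist x t ≤ Metric.infDist x s := ENNReal.toReal_mono h1 h
    rw [inf_eq_right.2 h, min_eq_right h3]; rfl

lemma summable_aux' (n : ℕ) (r : ℝ) (hr0 : 0 < r) (hr1 : r < 1) :
    Summable (fun j : ℕ => ((j : ℝ) + 2) ^ n * r ^ j) := by
  have hsum : Summable (fun m : ℕ => (m : ℝ) ^ n * r ^ m) :=
    summable_pow_mul_geometric_of_norm_lt_one n (by rwa [Real.norm_eq_abs, abs_of_nonneg hr0.le])
  have hcomp : Summable (fun j : ℕ => ((j + 2 : ℕ) : ℝ) ^ n * r ^ (j + 2)) :=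
    hsum.comp_injective (add_left_injective 2)
  have := hcomp.mul_left (r ^ 2)⁻¹
  apply this.congr
  intro j
  push_cast
  have hr2 : r ^ (j + 2) = r ^ j * r ^ 2 := by ring
  rw [hr2]
  field_simp

lemma summable_rpow_geom' (b q : ℝ) (hq : 0 < q) :
    Summable (fun j : ℕ => ((j : ℝ) + 2) ^ b * ((1/2 : ℝ) ^ q) ^ j) := by
  set r : ℝ := (1/2 : ℝ) ^ q with hr
  have hr0 : 0 < r := Real.rpow_pos_of_pos (by norm_num) q
  have hr1 : r < 1 := Real.rpow_lt_one (by norm_num : (0:ℝ) ≤ 1/2) (by norm_num) hq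
  have hn : Summable (fun j : ℕ => ((j : ℝ) + 2) ^ (⌈b⌉₊ : ℕ) * r ^ j) := summable_aux' _ r hr0 hr1
  apply Summable.of_nonneg_of_le _ _ hn
  · intro j
    positivity
  · intro j
    have h1 : ((j : ℝ) + 2) ^ b ≤ ((j : ℝ) + 2) ^ (⌈b⌉₊ : ℝ) :=
      Real.rpow_le_rpow_of_exponent_le (by have := Nat.cast_nonneg (α := ℝ) j; linarith)
        (Nat.le_ceil b)
    rw [Real.rpow_natCast] at h1
    exact mul_le_mul_of_nonneg_right h1 (by positivity)


/-- A real-valued function is subharmonic on `U` if it is upper semicontinuous on `U` and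
satisfies the sub-mean-value inequality on every ball whose corresponding closed ball
lies in `U`. -/
def SubharmonicOn {k : ℕ} (u : EuclideanSpace ℝ (Fin k) → ℝ)
    (U : Set (EuclideanSpace ℝ (Fin k))) : Prop :=
  UpperSemicontinuousOn u U ∧
    ∀ x ∈ U, ∀ r : ℝ, 0 < r → Metric.closedBall x r ⊆ U →
      u x ≤ ⨍ y in Metric.ball x r, u y

/-- First coordinate x′ of a point of ℝ^k. -/
def fstCoord (k : ℕ) (x : EuclideanSpace ℝ (Fin k)) : ℝ :=
  if h : 0 < k then x ⟨0, h⟩ else 0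

/-- Remaining coordinates x″ ∈ ℝ^{k-1} of a point of ℝ^k. -/
def sndCoord (k : ℕ) (x : EuclideanSpace ℝ (Fin k)) : EuclideanSpace ℝ (Fin (k - 1)) :=
  WithLp.toLp 2 (fun i : Fin (k - 1) => x ⟨i.1 + 1, by have := i.isLt; omega⟩)

/-- The open cylinder C(c,r,s) = B₁(c′,r) × B_{k−1}(c″,s). -/
def Cyl (k : ℕ) (c : EuclideanSpace ℝ (Fin k)) (r s : ℝ) : Set (EuclideanSpace ℝ (Fin k)) :=
  {x | |fstCoord k x - fstCoord k c| < r ∧ ‖sndCoord k x - sndCoord k c‖ < s}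

/-- A compact set A ⊂ ℝ^k is a Lipschitz curve if near any of its points it is a rotated
graph of a Lipschitz function of one variable. -/
def IsLipschitzCurve (k : ℕ) (A : Set (EuclideanSpace ℝ (Fin k))) : Prop :=
  IsCompact A ∧ ∃ L R : ℝ, 0 < L ∧ 0 < R ∧ ∀ a ∈ A,
    ∃ φ : ℝ → EuclideanSpace ℝ (Fin (k - 1)),
      (∀ s ∈ Metric.ball (0 : ℝ) R, ∀ t ∈ Metric.ball (0 : ℝ) R, ‖φ s - φ t‖ ≤ L * |s - t|) ∧
      ∃ U : EuclideanSpace ℝ (Fin k) ≃ₗᵢ[ℝ] EuclideanSpace ℝ (Fin k),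
        Cyl k 0 R (3 * L * R) ∩ (U '' ((· - a) '' A)) =
          {x | |fstCoord k x| < R ∧ sndCoord k x = φ (fstCoord k x)}

/-- η(t) = t^{2−k} for k > 2 and log(1/t) for k = 2. -/
def eta (k : ℕ) (t : ℝ) : ℝ := if 2 < k then t ^ ((2 : ℝ) - (k : ℝ)) else Real.log (1 / t)

/-- A compact set G ⊂ ℝ^k is p-admissible if
m([G]_σ ∩ B(x,R)) ≤ C σ^{k−p} R^p for all x, R > 0, σ > 0; here
[G]_σ = {y ∉ G : 0 < dist(y,G) ≤ σ}. -/
def PAdmissible (k : ℕ) (p : ℝ) (G : Set (EuclideanSpace ℝ (Fin k))) : Prop :=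
  IsCompact G ∧ ∃ C : ℝ, ∀ (x : EuclideanSpace ℝ (Fin k)) (R σ : ℝ), 0 < R → 0 < σ →
    volume ({y | y ∉ G ∧ 0 < Metric.infDist y G ∧ Metric.infDist y G ≤ σ} ∩ Metric.ball x R)
      ≤ ENNReal.ofReal (C * σ ^ ((k : ℝ) - p) * R ^ p)

/-- Corollary 2.7(2): logarithmic bound g(t) = (log(1/t))^b near a
p-admissible set. -/

theorem stmt_4 {k : ℕ} (hk : 2 ≤ k) (p : ℝ) (hp0 : 0 < p) (hpk : p < (k : ℝ))
    (Ω : Set (EuclideanSpace ℝ (Fin k))) (hΩo : IsOpen Ω) (hΩb : Bornology.IsBounded Ω)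
    (B : Set (EuclideanSpace ℝ (Fin k))) (hB : IsClosed B)
    (A : Set (EuclideanSpace ℝ (Fin k))) (hAΩ : A ⊆ Ω) (hA : PAdmissible k p A)
    (hA0 : volume A = 0)
    (b : ℝ) (hb0 : 0 < b)
    (α : ℝ) (hα0 : 0 < α) (hα2 : α < 1 / 2)
    (u : EuclideanSpace ℝ (Fin k) → ℝ) (hu : SubharmonicOn u (Ω \ B))
    (hbound : ∀ x ∈ Ω, 0 < Metric.infDist x (A ∪ B) → Metric.infDist x (A ∪ B) < α →
      u x ≤ Real.log (1 / Metric.infDist x (A ∪ B)) ^ b) :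
    ∀ a : ℝ, 1 < a →
      ∃ C τ₁ : ℝ, 0 < C ∧ 0 < τ₁ ∧
        ∀ x ∈ Ω, 0 < Metric.infDist x B → Metric.infDist x B < τ₁ →
          u x ≤ a * Real.log (C / Metric.infDist x B) ^ b := by
  classical
  intro a ha
  obtain ⟨hAcomp, CA₀, hCA₀⟩ := hA
  have hq0 : 0 < (k : ℝ) - p := by linarith
  set q : ℝ := (k : ℝ) - p with hqdef
  set CA : ℝ := max CA₀ 1 with hCAdef
  have hCA1 : (1:ℝ) ≤ CA := le_max_right _ _
  have hCApos : (0:ℝ) < CA := lt_of_lt_of_le one_pos hCA1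
  have hCA : ∀ (z : EuclideanSpace ℝ (Fin k)) (R σ : ℝ), 0 < R → 0 < σ →
      volume ({y | y ∉ A ∧ 0 < Metric.infDist y A ∧ Metric.infDist y A ≤ σ} ∩ Metric.ball z R)
        ≤ ENNReal.ofReal (CA * σ ^ q * R ^ p) := by
    intro z R σ hR hσ
    refine (hCA₀ z R σ hR hσ).trans (ENNReal.ofReal_le_ofReal ?_)
    have h1 : (0:ℝ) ≤ σ ^ q := Real.rpow_nonneg hσ.le q
    have h2 : (0:ℝ) ≤ R ^ p := Real.rpow_nonneg hR.le p
    have h3 : CA₀ ≤ CA := le_max_left _ _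
    exact mul_le_mul_of_nonneg_right (mul_le_mul_of_nonneg_right h3 h1) h2
  set r : ℝ := (1/2 : ℝ) ^ q with hrdef
  have hKs : Summable (fun j : ℕ => ((j:ℝ)+2)^b * r^j) := summable_rpow_geom' b q hq0
  set K : ℝ := ∑' j : ℕ, ((j:ℝ)+2)^b * r^j with hKdef
  have hr0 : 0 < r := Real.rpow_pos_of_pos (by norm_num) q
  have hK0 : 0 ≤ K := tsum_nonneg (fun j => by positivity)
  have hvtop : volume (ball (0 : EuclideanSpace ℝ (Fin k)) 1) ≠ ⊤ := measure_ball_lt_top.ne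
  have hv0 : 0 < (volume (ball (0 : EuclideanSpace ℝ (Fin k)) 1)).toReal :=
    ENNReal.toReal_pos (measure_ball_pos _ _ one_pos).ne' hvtop
  set vb : ℝ := (volume (ball (0 : EuclideanSpace ℝ (Fin k)) 1)).toReal with hvbdef
  -- trivial case : A empty
  rcases A.eq_empty_or_nonempty with rfl | hAne
  · refine ⟨2, min α (1/2), by norm_num, by positivity, ?_⟩
    intro x hxΩ hD0 hD1
    have hDα : Metric.infDist x B < α := lt_of_lt_of_le hD1 (min_le_left _ _)
    have hD2 : Metric.infDist x B < 1/2 := lt_of_lt_of_le hD1 (min_le_right _ _)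
    have hbx := hbound x hxΩ (by simpa using hD0) (by simpa using hDα)
    rw [Set.empty_union] at hbx
    set D := Metric.infDist x B with hDdef
    have h1 : (0:ℝ) ≤ Real.log (1/D) := Real.log_nonneg (by rw [le_div_iff₀ hD0]; linarith)
    have h2 : Real.log (1/D) ≤ Real.log (2/D) :=
      Real.log_le_log (one_div_pos.mpr hD0) ((div_le_div_iff_of_pos_right hD0).mpr one_le_two)
    have h3 : Real.log (1/D) ^ b ≤ Real.log (2/D) ^ b := Real.rpow_le_rpow h1 h2 hb0.le
    have h4 : (0:ℝ) ≤ Real.log (2/D) ^ b := Real.rpow_nonneg (h1.trans h2) b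
    have h5 : Real.log (2/D) ^ b ≤ a * Real.log (2/D) ^ b := le_mul_of_one_le_left h4 ha.le
    linarith
  -- main case : A nonempty
  obtain ⟨δA, hδA0, hδA⟩ := hAcomp.exists_thickening_subset_open hΩo hAΩ
  set δ₀ : ℝ := min (δA/2) (α/2) with hδ₀def
  have hδ₀0 : 0 < δ₀ := lt_min (by linarith) (by linarith)
  have hδα : δ₀ ≤ α/2 := min_le_right _ _
  have hδA2 : δ₀ ≤ δA/2 := min_le_left _ _
  set t : ℝ := (a-1)*vb/(CA*K*(2:ℝ)^q+1) with htdef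
  have hXnn : (0:ℝ) ≤ CA*K*(2:ℝ)^q :=
    mul_nonneg (mul_nonneg hCApos.le hK0) (Real.rpow_nonneg (by norm_num) q)
  have hden : (0:ℝ) < CA*K*(2:ℝ)^q+1 := by linarith
  have ht0 : 0 < t := div_pos (mul_pos (by linarith) hv0) hden
  set ε : ℝ := min (1/4) (t^(1/q)) with hεdef
  have hε0 : 0 < ε := lt_min (by norm_num) (Real.rpow_pos_of_pos ht0 _)
  have hε4 : ε ≤ 1/4 := min_le_left _ _
  have hεq : CA*K*(2:ℝ)^q*ε^q ≤ (a-1)*vb := by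
    have h1 : ε ^ q ≤ (t^(1/q))^q := Real.rpow_le_rpow hε0.le (min_le_right _ _) hq0.le
    have h2 : (t^(1/q))^q = t := by
      rw [← Real.rpow_mul ht0.le, one_div, inv_mul_cancel₀ hq0.ne', Real.rpow_one]
    have h3 : CA*K*(2:ℝ)^q*ε^q ≤ CA*K*(2:ℝ)^q*t :=
      mul_le_mul_of_nonneg_left (h2 ▸ h1) hXnn
    refine h3.trans ?_
    have h5 : (CA*K*(2:ℝ)^q)*t ≤ (CA*K*(2:ℝ)^q+1)*t :=
      mul_le_mul_of_nonneg_right (by linarith) ht0.le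
    have h6 : (CA*K*(2:ℝ)^q+1)*t = (a-1)*vb := by
      rw [htdef, mul_comm, div_mul_cancel₀ _ hden.ne']
    linarith
  refine ⟨1/ε, min δ₀ (1/2), one_div_pos.mpr hε0, lt_min hδ₀0 (by norm_num), ?_⟩
  intro x hxΩ hD0 hD1
  set D := Metric.infDist x B with hDdef
  have hBne : B.Nonempty := by
    rcases B.eq_empty_or_nonempty with rfl | h
    · rw [hDdef, Metric.infDist_empty] at hD0; linarith
    · exact h
  have hDδ : D < δ₀ := lt_of_lt_of_le hD1 (min_le_left _ _)
  have hD2 : D < 1/2 := lt_of_lt_of_le hD1 (min_le_right _ _)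
  have hεD0 : 0 < ε*D := mul_pos hε0 hD0
  have hεD2 : ε*D ≤ D/4 := by
    have := mul_le_mul_of_nonneg_right hε4 hD0.le
    linarith
  have hCD : (1:ℝ)/ε/D = 1/(ε*D) := by field_simp
  set L : ℝ := Real.log (1/(ε*D)) with hLdef
  have hL2 : Real.log 2 ≤ L := by
    apply Real.log_le_log two_pos
    rw [le_div_iff₀ hεD0]; linarith
  have hL0 : (0:ℝ) ≤ L := le_trans (Real.log_nonneg one_le_two) hL2
  have hLb0 : (0:ℝ) ≤ L^b := Real.rpow_nonneg hL0 b
  have hgoal_eq : Real.log (1/ε/D) = L := by rw [hLdef, hCD]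
  by_cases hxA : δ₀ ≤ Metric.infDist x A
  · -- far from A : direct bound
    have hmin : Metric.infDist x (A ∪ B) = min (Metric.infDist x A) D :=
      infDist_union_min' x hAne hBne
    have hdx : Metric.infDist x (A ∪ B) = D := by
      rw [hmin, min_eq_right (by linarith)]
    have hbx := hbound x hxΩ (by rw [hdx]; exact hD0) (by rw [hdx]; linarith)
    rw [hdx] at hbx
    have h1 : (0:ℝ) ≤ Real.log (1/D) := Real.log_nonneg (by rw [le_div_iff₀ hD0]; linarith)
    have h1ε : (1:ℝ) ≤ 1/ε := by rw [le_div_iff₀ hε0]; linarith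
    have h2 : Real.log (1/D) ≤ Real.log (1/ε/D) :=
      Real.log_le_log (one_div_pos.mpr hD0) ((div_le_div_iff_of_pos_right hD0).mpr h1ε)
    have h3 : Real.log (1/D) ^ b ≤ Real.log (1/ε/D) ^ b := Real.rpow_le_rpow h1 h2 hb0.le
    have h4 : (0:ℝ) ≤ Real.log (1/ε/D) ^ b := Real.rpow_nonneg (h1.trans h2) b
    have h5 : Real.log (1/ε/D) ^ b ≤ a * Real.log (1/ε/D) ^ b := le_mul_of_one_le_left h4 ha.le
    linarith
  · -- near A : use subharmonicity
    push_neg at hxA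
    set R : ℝ := D/2 with hRdef
    have hR0 : 0 < R := half_pos hD0
    have hxB : x ∉ B := by
      intro h
      rw [hDdef, Metric.infDist_zero_of_mem h] at hD0
      exact lt_irrefl 0 hD0
    have hball_d : ∀ y ∈ Metric.closedBall x R, Metric.infDist y A < 2*δ₀ ∧
        R ≤ Metric.infDist y B := by
      intro y hy
      have hd : dist y x ≤ R := mem_closedBall.mp hy
      constructor
      · calc Metric.infDist y A ≤ Metric.infDist x A + dist y x :=
              Metric.infDist_le_infDist_add_dist
          _ < δ₀ + R := by linarith
          _ ≤ 2*δ₀ := by linarith [hDδ]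
      · have h5 : Metric.infDist x B ≤ Metric.infDist y B + dist x y :=
          Metric.infDist_le_infDist_add_dist
        rw [dist_comm] at h5
        have : D ≤ Metric.infDist y B + dist y x := h5
        linarith
    have hsub : Metric.closedBall x R ⊆ Ω \ B := by
      intro y hy
      obtain ⟨h1, h2⟩ := hball_d y hy
      refine ⟨hδA ?_, fun hyB => ?_⟩
      · rw [mem_thickening_iff_infDist_lt hAne]
        linarith
      · rw [Metric.infDist_zero_of_mem hyB] at h2
        linarith
    have havg := hu.2 x ⟨hxΩ, hxB⟩ R hR0 hsub
    -- facts about d on the ball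
    have hdlt : ∀ y ∈ Metric.ball x R, Metric.infDist y (A ∪ B) < α ∧
        R ≤ Metric.infDist y B := by
      intro y hy
      obtain ⟨h1, h2⟩ := hball_d y (ball_subset_closedBall hy)
      refine ⟨?_, h2⟩
      rw [infDist_union_min' y hAne hBne]
      calc min (Metric.infDist y A) (Metric.infDist y B) ≤ Metric.infDist y A :=
            min_le_left _ _
        _ < 2*δ₀ := h1
        _ ≤ α := by linarith
    have hdpos : ∀ y ∈ Metric.ball x R, y ∉ A → 0 < Metric.infDist y (A ∪ B) := by
      intro y hy hyA
      rw [infDist_union_min' y hAne hBne]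
      refine lt_min ?_ (lt_of_lt_of_le hR0 (hdlt y hy).2)
      rcases lt_or_eq_of_le (Metric.infDist_nonneg (x := y) (s := A)) with h | h
      · exact h
      · exact absurd ((hAcomp.isClosed.mem_iff_infDist_zero hAne).2 h.symm) hyA
    -- the majorant g
    set g : EuclideanSpace ℝ (Fin k) → ℝ :=
      fun y => Real.log (1 / Metric.infDist y (A ∪ B)) ^ b with hgdef
    have hgmeas : Measurable g := by
      have h1 : Measurable fun y : EuclideanSpace ℝ (Fin k) =>
          Real.log (1 / Metric.infDist y (A ∪ B)) :=
        (measurable_const.div (continuous_infDist_pt (A ∪ B)).measurable).log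
      have hpowm : Measurable (fun s : ℝ => s ^ b) := by measurability
      exact hpowm.comp h1
    have hg0 : ∀ y ∈ Metric.ball x R, 0 ≤ g y := by
      intro y hy
      rcases eq_or_lt_of_le (Metric.infDist_nonneg (x := y) (s := A ∪ B)) with h0 | h0
      · rw [hgdef]
        simp only [← h0, div_zero, Real.log_zero, Real.zero_rpow hb0.ne']
        exact le_refl 0
      · refine Real.rpow_nonneg (Real.log_nonneg ?_) b
        rw [le_div_iff₀ h0]
        have := (hdlt y hy).1
        linarith
    -- the layer sets
    set σf : ℕ → ℝ := fun j => ε*D/2^j with hσdef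
    have hσpos : ∀ j, 0 < σf j := fun j => div_pos hεD0 (by positivity)
    have hσle : ∀ j, σf j ≤ ε*D := by
      intro j
      rw [hσdef]
      apply div_le_self hεD0.le
      exact one_le_pow₀ (by norm_num : (1:ℝ) ≤ 2)
    set S : ℕ → Set (EuclideanSpace ℝ (Fin k)) := fun j =>
      Metric.ball x R ∩ {y | σf (j+1) < Metric.infDist y (A ∪ B) ∧
        Metric.infDist y (A ∪ B) ≤ σf j} with hSdef
    -- covering of the small-distance part
    have hcov : Metric.ball x R ∩ {y | Metric.infDist y (A ∪ B) ≤ ε*D} ⊆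
        (Metric.ball x R ∩ A) ∪ ⋃ j, S j := by
      rintro y ⟨hy1, hy2⟩
      have hy2' : Metric.infDist y (A ∪ B) ≤ ε*D := hy2
      by_cases hyA : y ∈ A
      · exact Or.inl ⟨hy1, hyA⟩
      · right
        have hd0 : 0 < Metric.infDist y (A ∪ B) := hdpos y hy1 hyA
        have hex : ∃ n, σf n < Metric.infDist y (A ∪ B) := by
          obtain ⟨n, hn⟩ := exists_pow_lt_of_lt_one (div_pos hd0 hεD0)
            (by norm_num : (1/2:ℝ) < 1)
          refine ⟨n, ?_⟩
          have hs : σf n = ε*D*(1/2)^n := by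
            rw [hσdef, one_div, inv_pow]; ring
          rw [hs]
          calc ε*D*(1/2)^n < ε*D*(Metric.infDist y (A ∪ B)/(ε*D)) := by
                apply mul_lt_mul_of_pos_left hn hεD0
            _ = Metric.infDist y (A ∪ B) := by field_simp
        have hm := Nat.find_spec hex
        have hm0 : Nat.find hex ≠ 0 := by
          intro h0
          rw [h0] at hm
          have : σf 0 = ε*D := by rw [hσdef]; norm_num
          rw [this] at hm
          linarith
        obtain ⟨j, hj⟩ : ∃ j, Nat.find hex = j+1 :=
          ⟨Nat.find hex - 1, (Nat.succ_pred_eq_of_pos (Nat.pos_of_ne_zero hm0)).symm⟩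
        refine mem_iUnion.2 ⟨j, hy1, ?_, ?_⟩
        · rw [← hj]; exact hm
        · have := Nat.find_min hex (by omega : j < Nat.find hex)
          exact not_lt.1 this
    -- pointwise bound on S j
    have hSj_bound : ∀ j, ∀ y ∈ S j, g y ≤ ((j:ℝ)+2)^b * L^b := by
      rintro j y ⟨hy1, hy2, hy3⟩
      have hd0 : 0 < Metric.infDist y (A ∪ B) := lt_trans (hσpos _) hy2
      have hlog1 : 0 ≤ Real.log (1/Metric.infDist y (A ∪ B)) := by
        apply Real.log_nonneg
        rw [le_div_iff₀ hd0]
        have := (hdlt y hy1).1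
        linarith
      have hstep : Real.log (1/Metric.infDist y (A ∪ B)) ≤ Real.log (1/σf (j+1)) :=
        Real.log_le_log (one_div_pos.mpr hd0)
          (one_div_le_one_div_of_le (hσpos _) hy2.le)
      have hveq : (1:ℝ)/σf (j+1) = 2^(j+1) * (1/(ε*D)) := by
        rw [hσdef]
        field_simp
      have hval : Real.log (1/σf (j+1)) = ((j:ℝ)+1)*Real.log 2 + L := by
        rw [hveq, Real.log_mul (by positivity) (one_div_pos.mpr hεD0).ne', Real.log_pow, hLdef]
        push_cast; ring
      have hjn : (0:ℝ) ≤ (j:ℝ)+1 := by positivity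
      have hval2 : ((j:ℝ)+1)*Real.log 2 + L ≤ ((j:ℝ)+2)*L := by
        have h20 := mul_le_mul_of_nonneg_left hL2 hjn
        have h21 : ((j:ℝ)+2)*L = ((j:ℝ)+1)*L + L := by ring
        linarith
      have hfin : Real.log (1/Metric.infDist y (A ∪ B)) ≤ ((j:ℝ)+2)*L := by
        rw [hval] at hstep; linarith
      calc g y ≤ (((j:ℝ)+2)*L)^b := Real.rpow_le_rpow hlog1 hfin hb0.le
        _ = ((j:ℝ)+2)^b * L^b := Real.mul_rpow (by positivity) hL0
    -- volume bound on S j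
    have hSj_vol : ∀ j, volume (S j) ≤ ENNReal.ofReal (CA * (σf j)^q * R^p) := by
      intro j
      refine le_trans (measure_mono ?_) (hCA x R (σf j) hR0 (hσpos j))
      rintro y ⟨hy1, hy2, hy3⟩
      have hyB : R ≤ Metric.infDist y B := (hdlt y hy1).2
      have hσR : σf j < R := by
        have h6 := hσle j
        rw [hRdef]
        linarith
      have hmin := infDist_union_min' y hAne hBne
      have hdA : Metric.infDist y A ≤ σf j := by
        by_contra hcon
        push_neg at hcon
        have h7 : σf j < Metric.infDist y (A ∪ B) := by
          rw [hmin]; exact lt_min hcon (lt_of_lt_of_le hσR hyB)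
        linarith
      have hd0 : 0 < Metric.infDist y (A ∪ B) := lt_trans (hσpos _) hy2
      have hdA0 : 0 < Metric.infDist y A := by
        apply lt_of_lt_of_le hd0
        rw [hmin]; exact min_le_left _ _
      exact ⟨⟨fun hyA => absurd (Metric.infDist_zero_of_mem hyA) hdA0.ne', hdA0, hdA⟩, hy1⟩
    -- lintegral over E2
    have hSmeas : ∀ j, MeasurableSet (S j) := by
      intro j
      apply measurableSet_ball.inter
      apply MeasurableSet.inter
      · exact measurableSet_lt measurable_const (continuous_infDist_pt _).measurable
      · exact measurableSet_le (continuous_infDist_pt _).measurable measurable_const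
    have hE2 : ∫⁻ y in Metric.ball x R ∩ {y | Metric.infDist y (A ∪ B) ≤ ε*D},
        ENNReal.ofReal (g y) ≤ ENNReal.ofReal (CA*K*(ε*D)^q*R^p*L^b) := by
      refine le_trans (lintegral_mono_set hcov) ?_
      refine le_trans (lintegral_union_le _ _ _) ?_
      have hz : ∫⁻ y in Metric.ball x R ∩ A, ENNReal.ofReal (g y) = 0 :=
        setLIntegral_measure_zero _ _ (measure_mono_null inter_subset_right hA0)
      rw [hz, zero_add]
      refine le_trans (lintegral_iUnion_le _ _) ?_
      have hterm : ∀ j, ∫⁻ y in S j, ENNReal.ofReal (g y) ≤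
          ENNReal.ofReal ((CA*(ε*D)^q*R^p*L^b) * (((j:ℝ)+2)^b * r^j)) := by
        intro j
        have hle1 : ∫⁻ y in S j, ENNReal.ofReal (g y) ≤
            ∫⁻ _ in S j, ENNReal.ofReal (((j:ℝ)+2)^b * L^b) := by
          apply setLIntegral_mono measurable_const
          intro y hy
          exact ENNReal.ofReal_le_ofReal (hSj_bound j y hy)
        rw [setLIntegral_const] at hle1
        refine hle1.trans ?_
        calc ENNReal.ofReal (((j:ℝ)+2)^b * L^b) * volume (S j)
            ≤ ENNReal.ofReal (((j:ℝ)+2)^b * L^b) * ENNReal.ofReal (CA * (σf j)^q * R^p) :=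
              mul_le_mul_right (hSj_vol j) _
          _ = ENNReal.ofReal ((((j:ℝ)+2)^b * L^b) * (CA * (σf j)^q * R^p)) := by
              rw [← ENNReal.ofReal_mul (mul_nonneg (Real.rpow_nonneg (by positivity) b) hLb0)]
          _ = ENNReal.ofReal ((CA*(ε*D)^q*R^p*L^b) * (((j:ℝ)+2)^b * r^j)) := by
              congr 1
              have hσq : (σf j)^q = (ε*D)^q * r^j := by
                have h8 : σf j = (ε*D) * (1/2)^j := by
                  rw [hσdef, one_div, inv_pow]; ring
                rw [h8, Real.mul_rpow hεD0.le (by positivity), hrdef]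
                congr 1
                rw [← Real.rpow_natCast ((1:ℝ)/2) j, ← Real.rpow_natCast ((1/2:ℝ)^q) j,
                  ← Real.rpow_mul (by norm_num), ← Real.rpow_mul (by norm_num), mul_comm]
              rw [hσq]; ring
      refine le_trans (ENNReal.tsum_le_tsum hterm) ?_
      have hc_nn : (0:ℝ) ≤ CA*(ε*D)^q*R^p*L^b :=
        mul_nonneg (mul_nonneg (mul_nonneg hCApos.le (Real.rpow_nonneg hεD0.le q))
          (Real.rpow_nonneg hR0.le p)) hLb0
      rw [← ENNReal.ofReal_tsum_of_nonneg
        (fun j => mul_nonneg hc_nn (mul_nonneg (Real.rpow_nonneg (by positivity) b)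
          (pow_nonneg hr0.le j))) (hKs.mul_left _), tsum_mul_left]
      apply ENNReal.ofReal_le_ofReal
      rw [← hKdef]
      apply le_of_eq; ring
    -- lintegral over E1
    have hE1 : ∫⁻ y in Metric.ball x R ∩ {y | ε*D < Metric.infDist y (A ∪ B)},
        ENNReal.ofReal (g y) ≤ ENNReal.ofReal (L^b) * volume (Metric.ball x R) := by
      have hle1 : ∫⁻ y in Metric.ball x R ∩ {y | ε*D < Metric.infDist y (A ∪ B)},
          ENNReal.ofReal (g y) ≤
          ∫⁻ _ in Metric.ball x R ∩ {y | ε*D < Metric.infDist y (A ∪ B)},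
            ENNReal.ofReal (L^b) := by
        apply setLIntegral_mono measurable_const
        rintro y ⟨hy1, hy2⟩
        apply ENNReal.ofReal_le_ofReal
        have hd0 : 0 < Metric.infDist y (A ∪ B) := lt_trans hεD0 hy2
        have hlog1 : 0 ≤ Real.log (1/Metric.infDist y (A ∪ B)) := by
          apply Real.log_nonneg
          rw [le_div_iff₀ hd0]
          have := (hdlt y hy1).1
          linarith
        have hstep : Real.log (1/Metric.infDist y (A ∪ B)) ≤ L := by
          rw [hLdef]
          exact Real.log_le_log (one_div_pos.mpr hd0) (one_div_le_one_div_of_le hεD0 hy2.le)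
        exact Real.rpow_le_rpow hlog1 hstep hb0.le
      rw [setLIntegral_const] at hle1
      refine hle1.trans ?_
      exact mul_le_mul_right (measure_mono inter_subset_left) _
    -- total lintegral
    haveI : Nontrivial (EuclideanSpace ℝ (Fin k)) := by
      refine ⟨⟨0, EuclideanSpace.single (⟨0, by omega⟩ : Fin k) 1, fun h => ?_⟩⟩
      have h2 := congrArg (fun v : EuclideanSpace ℝ (Fin k) => v (⟨0, by omega⟩ : Fin k)) h
      simp [EuclideanSpace.single_apply] at h2
    have hVeq : volume (Metric.ball x R) = ENNReal.ofReal (R^k * vb) := by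
      rw [Measure.addHaar_ball volume x hR0.le, finrank_euclideanSpace_fin,
        ENNReal.ofReal_mul (pow_nonneg hR0.le k), hvbdef, ENNReal.ofReal_toReal hvtop]
    set M : ℝ := L^b*(R^k*vb) + CA*K*(ε*D)^q*R^p*L^b with hMdef
    have hM2nn : (0:ℝ) ≤ CA*K*(ε*D)^q*R^p*L^b :=
      mul_nonneg (mul_nonneg (mul_nonneg (mul_nonneg hCApos.le hK0)
        (Real.rpow_nonneg hεD0.le q)) (Real.rpow_nonneg hR0.le p)) hLb0
    have hRkvb : (0:ℝ) ≤ R^k*vb := mul_nonneg (pow_nonneg hR0.le k) hv0.le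
    have hM0 : 0 ≤ M := by
      have h9 : (0:ℝ) ≤ L^b*(R^k*vb) := mul_nonneg hLb0 hRkvb
      linarith
    have hT : ∫⁻ y in Metric.ball x R, ENNReal.ofReal (g y) ≤ ENNReal.ofReal M := by
      have hcov2 : Metric.ball x R ⊆
          (Metric.ball x R ∩ {y | ε*D < Metric.infDist y (A ∪ B)}) ∪
          (Metric.ball x R ∩ {y | Metric.infDist y (A ∪ B) ≤ ε*D}) := by
        intro y hy
        rcases lt_or_ge (ε*D) (Metric.infDist y (A ∪ B)) with h | h
        · exact Or.inl ⟨hy, h⟩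
        · exact Or.inr ⟨hy, h⟩
      refine le_trans (lintegral_mono_set hcov2) ?_
      refine le_trans (lintegral_union_le _ _ _) ?_
      refine le_trans (add_le_add hE1 hE2) ?_
      rw [hVeq, ← ENNReal.ofReal_mul hLb0, ← ENNReal.ofReal_add (mul_nonneg hLb0 hRkvb) hM2nn]
    -- integrability of g and the integral bound
    have hae0 : 0 ≤ᵐ[volume.restrict (Metric.ball x R)] g :=
      (ae_restrict_iff' measurableSet_ball).2 (Filter.Eventually.of_forall hg0)
    have hgint : IntegrableOn g (Metric.ball x R) := by
      refine ⟨hgmeas.aestronglyMeasurable.restrict, ?_⟩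
      have heq : ∫⁻ y in Metric.ball x R, ‖g y‖ₑ =
          ∫⁻ y in Metric.ball x R, ENNReal.ofReal (g y) := by
        apply lintegral_congr_ae
        filter_upwards [hae0] with y hy
        rw [← Real.enorm_eq_ofReal hy]
      rw [HasFiniteIntegral, heq]
      exact lt_of_le_of_lt hT ENNReal.ofReal_lt_top
    have hint_g : ∫ y in Metric.ball x R, g y ≤ M := by
      rw [integral_eq_lintegral_of_nonneg_ae hae0 hgmeas.aestronglyMeasurable.restrict]
      exact ENNReal.toReal_le_of_le_ofReal hM0 hT
    -- the average bound
    have hVreal : (volume (Metric.ball x R)).toReal = R^k * vb := by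
      rw [hVeq, ENNReal.toReal_ofReal hRkvb]
    have hVpos : 0 < (volume (Metric.ball x R)).toReal := by
      rw [hVreal]; exact mul_pos (pow_pos hR0 k) hv0
    have havg2 : ⨍ y in Metric.ball x R, u y ≤ (volume (Metric.ball x R)).toReal⁻¹ * M := by
      rw [setAverage_eq, smul_eq_mul]
      by_cases hIu : IntegrableOn u (Metric.ball x R) volume
      · have hle : u ≤ᵐ[volume.restrict (Metric.ball x R)] g := by
          have hAae : ∀ᵐ y ∂(volume : Measure (EuclideanSpace ℝ (Fin k))), y ∉ A := by
            rw [ae_iff]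
            simpa [not_not] using hA0
          refine (ae_restrict_iff' measurableSet_ball).2 ?_
          filter_upwards [hAae] with y hyA hyball
          have hyΩB := hsub (ball_subset_closedBall hyball)
          exact hbound y hyΩB.1 (hdpos y hyball hyA) (hdlt y hyball).1
        have h10 : ∫ y in Metric.ball x R, u y ≤ ∫ y in Metric.ball x R, g y :=
          integral_mono_ae hIu hgint hle
        calc (volume (Metric.ball x R)).toReal⁻¹ * ∫ y in Metric.ball x R, u y
            ≤ (volume (Metric.ball x R)).toReal⁻¹ * ∫ y in Metric.ball x R, g y := by
              exact mul_le_mul_of_nonneg_left h10 (inv_nonneg.mpr ENNReal.toReal_nonneg)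
          _ ≤ (volume (Metric.ball x R)).toReal⁻¹ * M := by
              exact mul_le_mul_of_nonneg_left hint_g (inv_nonneg.mpr ENNReal.toReal_nonneg)
      · rw [integral_undef hIu, mul_zero]
        exact mul_nonneg (inv_nonneg.mpr ENNReal.toReal_nonneg) hM0
    -- final computation
    have hkey : (ε*D)^q * R^p = ε^q * 2^q * (R^k : ℝ) := by
      have h1 : (ε*D)^q = ε^q * D^q := Real.mul_rpow hε0.le hD0.le
      have h2 : D = 2*R := by rw [hRdef]; ring
      have h3 : D^q = (2:ℝ)^q * R^q := by rw [h2, Real.mul_rpow (by norm_num) hR0.le]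
      have h4 : R^q * R^p = (R:ℝ)^(k:ℕ) := by
        rw [← Real.rpow_natCast R k, ← Real.rpow_add hR0]
        congr 1
        rw [hqdef]; ring
      calc (ε*D)^q * R^p = ε^q * ((2:ℝ)^q * R^q) * R^p := by rw [h1, h3]
        _ = ε^q * (2:ℝ)^q * (R^q * R^p) := by ring
        _ = ε^q * 2^q * (R:ℝ)^(k:ℕ) := by rw [h4]
    have hfinal : (volume (Metric.ball x R)).toReal⁻¹ * M ≤ a * L^b := by
      rw [hVreal, hMdef]
      have hRk : (0:ℝ) < (R:ℝ)^(k:ℕ) := pow_pos hR0 k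
      rw [inv_mul_le_iff₀ (mul_pos hRk hv0)]
      have h12 : (CA*K*(2:ℝ)^q*ε^q)*((R:ℝ)^(k:ℕ)*L^b) ≤ ((a-1)*vb)*((R:ℝ)^(k:ℕ)*L^b) :=
        mul_le_mul_of_nonneg_right hεq (mul_nonneg hRk.le hLb0)
      calc L^b*(R^k*vb) + CA*K*(ε*D)^q*R^p*L^b
          = L^b*((R:ℝ)^(k:ℕ)*vb) + (CA*K*(2:ℝ)^q*ε^q)*((R:ℝ)^(k:ℕ)*L^b) := by
            rw [mul_assoc (CA*K) ((ε*D)^q) (R^p), hkey]; ring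
        _ ≤ L^b*((R:ℝ)^(k:ℕ)*vb) + ((a-1)*vb)*((R:ℝ)^(k:ℕ)*L^b) := add_le_add_right h12 _
        _ = (R:ℝ)^(k:ℕ)*vb*(a*L^b) := by ring
    -- conclude
    rw [hgoal_eq]
    calc u x ≤ ⨍ y in Metric.ball x R, u y := havg
      _ ≤ (volume (Metric.ball x R)).toReal⁻¹ * M := havg2
      _ ≤ a * L^b := hfinal
end
end

section
/- Let k ≥ 2 and write points of ℝ^k as x = (x′,x″) ∈ ℝ × ℝ^{k−1}. Let A ⊂ ℝ^k be a compact set, let L ≥ 2, R > 0 and α > R/2, let a = (a′,a″) ∈ A, and suppose φ : (a′−R, a′+R) → ℝ^{k−1} is Lipschitz with constant at most L and A ∩ C(a,R,3LR) = {(x′, φ(x′)) : |x′ − a′| < R}, where C(x,r,s) = B₁(x′,r) × B_{k−1}(x″,s). Let D be a bounded domain in ℝ^k with C(0,1,2L) ⊆ D ⊆ C(0,1,3L), let r ∈ (0, R/(20L)), and set D_{a,r} = a + rD. Let y = (a′−r, φ(a′−r)) and z = (a′+r, φ(a′+r)) be the two points of A on ∂D_{a,r}. Let g : (0,α) → (0,∞)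 be a decreasing function, and define v(x) = g(|x−y|/(8L)) + g(|x−z|/(8L)) for x ∈ closure(D_{a,r}) ∖ {y,z}. Then for every x ∈ ∂D_{a,r} ∖ {y,z} one has g(dist(x,A)) ≤ v(x) − g(r). -/
open MeasureTheory Metric Set Filter

noncomputable section

/-- The point (t, w) ∈ ℝ × ℝ^{k−1} viewed as a point of ℝ^k. -/
def emb (k : ℕ) (t : ℝ) (w : EuclideanSpace ℝ (Fin (k - 1))) : EuclideanSpace ℝ (Fin k) :=
  WithLp.toLp 2 (fun i : Fin k => if h : i.1 = 0 then t else w ⟨i.1 - 1, by have := i.isLt; omega⟩)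

namespace Stmt11Aux

variable {k : ℕ}

lemma fstCoord_add (u v : EuclideanSpace ℝ (Fin k)) :
    fstCoord k (u + v) = fstCoord k u + fstCoord k v := by
  unfold fstCoord; split <;> simp

lemma fstCoord_smul (c : ℝ) (u : EuclideanSpace ℝ (Fin k)) :
    fstCoord k (c • u) = c * fstCoord k u := by
  unfold fstCoord; split <;> simp

lemma fstCoord_sub (u v : EuclideanSpace ℝ (Fin k)) :
    fstCoord k (u - v) = fstCoord k u - fstCoord k v := by
  unfold fstCoord; split <;> simp

lemma fstCoord_zero : fstCoord k 0 = 0 := by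
  unfold fstCoord; split <;> simp

lemma sndCoord_add (u v : EuclideanSpace ℝ (Fin k)) :
    sndCoord k (u + v) = sndCoord k u + sndCoord k v := by ext i; simp [sndCoord]

lemma sndCoord_smul (c : ℝ) (u : EuclideanSpace ℝ (Fin k)) :
    sndCoord k (c • u) = c • sndCoord k u := by ext i; simp [sndCoord]

lemma sndCoord_sub (u v : EuclideanSpace ℝ (Fin k)) :
    sndCoord k (u - v) = sndCoord k u - sndCoord k v := by ext i; simp [sndCoord]

lemma sndCoord_zero : sndCoord k (0 : EuclideanSpace ℝ (Fin k)) = 0 := by ext i; simp [sndCoord]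

lemma norm_sq_decomp (hk : 0 < k) (u : EuclideanSpace ℝ (Fin k)) :
    ‖u‖ ^ 2 = (fstCoord k u) ^ 2 + ‖sndCoord k u‖ ^ 2 := by
  obtain ⟨m, rfl⟩ : ∃ m, k = m + 1 := ⟨k - 1, by omega⟩
  rw [EuclideanSpace.norm_eq u, EuclideanSpace.norm_eq (sndCoord (m+1) u),
    Real.sq_sqrt (by positivity), Real.sq_sqrt (by positivity), Fin.sum_univ_succ]
  simp only [fstCoord, sndCoord, dif_pos hk, Real.norm_eq_abs, sq_abs]
  congr 1

lemma abs_fst_le (hk : 0 < k) (u : EuclideanSpace ℝ (Fin k)) :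
    |fstCoord k u| ≤ ‖u‖ := by
  have h := norm_sq_decomp hk u
  nlinarith [norm_nonneg u, abs_nonneg (fstCoord k u), norm_nonneg (sndCoord k u),
    sq_abs (fstCoord k u)]

lemma norm_snd_le (hk : 0 < k) (u : EuclideanSpace ℝ (Fin k)) :
    ‖sndCoord k u‖ ≤ ‖u‖ := by
  have h := norm_sq_decomp hk u
  nlinarith [norm_nonneg u, norm_nonneg (sndCoord k u), sq_nonneg (fstCoord k u)]

lemma norm_le_fst_add_snd (hk : 0 < k) (u : EuclideanSpace ℝ (Fin k)) :
    ‖u‖ ≤ |fstCoord k u| + ‖sndCoord k u‖ := by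
  have h := norm_sq_decomp hk u
  nlinarith [norm_nonneg u, abs_nonneg (fstCoord k u), norm_nonneg (sndCoord k u),
    sq_abs (fstCoord k u), mul_nonneg (abs_nonneg (fstCoord k u)) (norm_nonneg (sndCoord k u))]

lemma fst_emb (hk : 0 < k) (t : ℝ) (w : EuclideanSpace ℝ (Fin (k-1))) :
    fstCoord k (emb k t w) = t := by
  simp [fstCoord, emb, hk]

lemma snd_emb (t : ℝ) (w : EuclideanSpace ℝ (Fin (k-1))) :
    sndCoord k (emb k t w) = w := by
  ext i
  simp [sndCoord, emb]

lemma ext_coords (hk : 0 < k) {u v : EuclideanSpace ℝ (Fin k)}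
    (h1 : fstCoord k u = fstCoord k v) (h2 : sndCoord k u = sndCoord k v) : u = v := by
  ext i
  rcases i with ⟨i, hi⟩
  cases i with
  | zero => simpa [fstCoord, hk] using h1
  | succ n =>
    have := congrArg (fun w => w ⟨n, by omega⟩) h2
    exact this

def fstL (k : ℕ) : EuclideanSpace ℝ (Fin k) →ₗ[ℝ] ℝ where
  toFun := fstCoord k
  map_add' := fstCoord_add
  map_smul' := fstCoord_smul

def sndL (k : ℕ) : EuclideanSpace ℝ (Fin k) →ₗ[ℝ] EuclideanSpace ℝ (Fin (k-1)) where
  toFun := sndCoord k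
  map_add' := sndCoord_add
  map_smul' := sndCoord_smul

lemma cont_fst : Continuous (fstCoord k) := (fstL k).continuous_of_finiteDimensional

lemma cont_snd : Continuous (sndCoord k) := (sndL k).continuous_of_finiteDimensional

lemma closed_box (a1 : ℝ) (a2 : EuclideanSpace ℝ (Fin (k-1))) (r s : ℝ) :
    IsClosed {x : EuclideanSpace ℝ (Fin k) |
      |fstCoord k x - a1| ≤ r ∧ ‖sndCoord k x - a2‖ ≤ s} := by
  have c1 : Continuous fun x : EuclideanSpace ℝ (Fin k) => |fstCoord k x - a1| :=
    (cont_fst.sub continuous_const).abs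
  have c2 : Continuous fun x : EuclideanSpace ℝ (Fin k) => ‖sndCoord k x - a2‖ :=
    (cont_snd.sub continuous_const).norm
  exact (isClosed_le c1 continuous_const).inter (isClosed_le c2 continuous_const)

end Stmt11Aux

namespace Stmt11Aux

variable {k : ℕ}

lemma isOpenMap_T (a : EuclideanSpace ℝ (Fin k)) {r : ℝ} (hr : r ≠ 0) :
    IsOpenMap (fun w : EuclideanSpace ℝ (Fin k) => a + r • w) := by
  have : (fun w : EuclideanSpace ℝ (Fin k) => a + r • w)
      = (fun w : EuclideanSpace ℝ (Fin k) => a + w) ∘ (fun w : EuclideanSpace ℝ (Fin k) => r • w) := rfl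
  rw [this]
  exact (isOpenMap_add_left a).comp (isOpenMap_smul₀ hr)

/-- image of open cylinder contains inner strict box -/
lemma box_subset_image (hk : 0 < k) (a : EuclideanSpace ℝ (Fin k)) {r s : ℝ} (hr : 0 < r) :
    {x : EuclideanSpace ℝ (Fin k) | |fstCoord k x - fstCoord k a| < r ∧
      ‖sndCoord k x - sndCoord k a‖ < s * r}
    ⊆ (fun w : EuclideanSpace ℝ (Fin k) => a + r • w) '' Cyl k 0 1 s := by
  rintro x ⟨h1, h2⟩
  refine ⟨r⁻¹ • (x - a), ⟨?_, ?_⟩, ?_⟩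
  · rw [fstCoord_smul, fstCoord_sub, fstCoord_zero]
    rw [sub_zero, abs_mul, abs_inv, abs_of_pos hr]
    rw [inv_mul_lt_iff₀ hr, mul_one]
    exact h1
  · rw [sndCoord_smul, sndCoord_sub, sndCoord_zero, sub_zero, norm_smul]
    rw [norm_inv, Real.norm_eq_abs, abs_of_pos hr]
    rw [inv_mul_lt_iff₀ hr, mul_comm]
    exact h2
  · show a + r • r⁻¹ • (x - a) = x
    rw [smul_smul, mul_inv_cancel₀ (ne_of_gt hr), one_smul]
    abel

/-- image of open cylinder is inside weak box -/
lemma image_subset_box (a : EuclideanSpace ℝ (Fin k)) {r s : ℝ} (hr : 0 < r) (hs : 0 ≤ s) :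
    (fun w : EuclideanSpace ℝ (Fin k) => a + r • w) '' Cyl k 0 1 s
    ⊆ {x : EuclideanSpace ℝ (Fin k) | |fstCoord k x - fstCoord k a| ≤ r ∧
      ‖sndCoord k x - sndCoord k a‖ ≤ s * r} := by
  rintro _ ⟨w, ⟨h1, h2⟩, rfl⟩
  rw [fstCoord_zero, sub_zero] at h1
  rw [sndCoord_zero, sub_zero] at h2
  constructor
  · rw [fstCoord_add, fstCoord_smul]
    simp only [add_sub_cancel_left]
    rw [abs_mul, abs_of_pos hr]
    nlinarith [abs_nonneg (fstCoord k w)]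
  · rw [sndCoord_add, sndCoord_smul]
    simp only [add_sub_cancel_left]
    rw [norm_smul, Real.norm_eq_abs, abs_of_pos hr]
    nlinarith [norm_nonneg (sndCoord k w)]

end Stmt11Aux

set_option maxHeartbeats 1000000 in
/-- Lemma 3.2: on the boundary of D_{a,r}, g(dist(x,A)) ≤ v(x) − g(r)
where v(x) = g(|x−y|/8L) + g(|x−z|/8L). -/
theorem stmt_11 {k : ℕ} (hk : 2 ≤ k)
    (A : Set (EuclideanSpace ℝ (Fin k))) (hA : IsCompact A)
    (L R α : ℝ) (hL : 2 ≤ L) (hR : 0 < R) (hα : R / 2 < α)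
    (a : EuclideanSpace ℝ (Fin k)) (ha : a ∈ A)
    (φ : ℝ → EuclideanSpace ℝ (Fin (k - 1)))
    (hφLip : ∀ s ∈ Set.Ioo (fstCoord k a - R) (fstCoord k a + R),
      ∀ t ∈ Set.Ioo (fstCoord k a - R) (fstCoord k a + R), ‖φ s - φ t‖ ≤ L * |s - t|)
    (hgraph : A ∩ Cyl k a R (3 * L * R) =
      {x | |fstCoord k x - fstCoord k a| < R ∧ sndCoord k x = φ (fstCoord k x)})
    (D : Set (EuclideanSpace ℝ (Fin k))) (hDo : IsOpen D) (hDc : IsConnected D)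
    (hDb : Bornology.IsBounded D)
    (hD1 : Cyl k 0 1 (2 * L) ⊆ D) (hD2 : D ⊆ Cyl k 0 1 (3 * L))
    (r : ℝ) (hr0 : 0 < r) (hr : r < R / (20 * L))
    (y z : EuclideanSpace ℝ (Fin k))
    (hy : y = emb k (fstCoord k a - r) (φ (fstCoord k a - r)))
    (hz : z = emb k (fstCoord k a + r) (φ (fstCoord k a + r)))
    (hyA : y ∈ A ∩ frontier ((fun w => a + r • w) '' D))
    (hzA : z ∈ A ∩ frontier ((fun w => a + r • w) '' D))
    (g : ℝ → ℝ) (hgpos : ∀ t ∈ Set.Ioo (0 : ℝ) α, 0 < g t)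
    (hgdec : AntitoneOn g (Set.Ioo (0 : ℝ) α)) :
    ∀ x ∈ frontier ((fun w => a + r • w) '' D), x ≠ y → x ≠ z →
      g (Metric.infDist x A) ≤
        g (‖x - y‖ / (8 * L)) + g (‖x - z‖ / (8 * L)) - g r := by
  classical
  open Stmt11Aux in
  have hk0 : 0 < k := by omega
  have hL0 : (0:ℝ) < L := by linarith
  -- basic size facts
  have hKey : 20 * L * r < R := by
    have := (lt_div_iff₀ (by positivity : (0:ℝ) < 20 * L)).mp hr
    linarith
  have hprod : r * 2 ≤ r * L := mul_le_mul_of_nonneg_left hL hr0.le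
  have h40r : 40 * r ≤ 20 * L * r :=
    mul_le_mul_of_nonneg_right (by linarith : (40:ℝ) ≤ 20 * L) hr0.le
  have hrR : r < R := by linarith
  have hrα : r < α := by linarith
  set a1 := fstCoord k a with ha1
  set a2 := sndCoord k a with ha2
  set T := fun w : EuclideanSpace ℝ (Fin k) => a + r • w with hT
  -- the image is open
  have hUopen : IsOpen (T '' D) := isOpenMap_T a hr0.ne' D hDo
  -- frontier points lie in the closed outer box
  have hfr_box : ∀ x ∈ frontier (T '' D),
      |fstCoord k x - a1| ≤ r ∧ ‖sndCoord k x - a2‖ ≤ 3 * L * r := by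
    intro x hx
    have hsub : T '' D ⊆ {x : EuclideanSpace ℝ (Fin k) |
        |fstCoord k x - a1| ≤ r ∧ ‖sndCoord k x - a2‖ ≤ 3 * L * r} :=
      (Set.image_mono hD2).trans (image_subset_box a hr0 (by positivity))
    exact closure_minimal hsub (closed_box a1 a2 r (3 * L * r)) (frontier_subset_closure hx)
  -- frontier points are not in the inner open box
  have hfr_notin : ∀ x ∈ frontier (T '' D),
      ¬(|fstCoord k x - a1| < r ∧ ‖sndCoord k x - a2‖ < 2 * L * r) := by
    intro x hx hmem
    have hxin : x ∈ T '' D :=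
      (Set.image_mono hD1) (box_subset_image hk0 a hr0 ⟨hmem.1, hmem.2⟩)
    rw [hUopen.frontier_eq] at hx
    exact hx.2 hxin
  -- a is a graph point
  have haGraph : a2 = φ a1 := by
    have hmem : a ∈ A ∩ Cyl k a R (3 * L * R) := by
      refine ⟨ha, ?_, ?_⟩
      · simpa using hR
      · simp only [sub_self, norm_zero]; positivity
    rw [hgraph] at hmem
    exact hmem.2
  have hIoo : ∀ t : ℝ, |t - a1| < R → t ∈ Set.Ioo (a1 - R) (a1 + R) := by
    intro t ht
    have := abs_lt.mp ht
    exact ⟨by linarith [this.1], by linarith [this.2]⟩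
  -- coordinates of y and z
  have hy1 : fstCoord k y = a1 - r := by rw [hy, fst_emb hk0]
  have hy2 : sndCoord k y = φ (a1 - r) := by rw [hy, snd_emb]
  have hz1 : fstCoord k z = a1 + r := by rw [hz, fst_emb hk0]
  have hz2 : sndCoord k z = φ (a1 + r) := by rw [hz, snd_emb]
  -- diameter-type bound
  have hdiam : ∀ u v : EuclideanSpace ℝ (Fin k), u ∈ frontier (T '' D) →
      v ∈ frontier (T '' D) → ‖u - v‖ ≤ (6 * L + 2) * r := by
    intro u v hu hv
    obtain ⟨hu1, hu2⟩ := hfr_box u hu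
    obtain ⟨hv1, hv2⟩ := hfr_box v hv
    have h0 := norm_le_fst_add_snd hk0 (u - v)
    rw [fstCoord_sub, sndCoord_sub] at h0
    have e1 : |fstCoord k u - fstCoord k v| ≤ 2 * r := by
      have t1 := abs_sub_le (fstCoord k u) a1 (fstCoord k v)
      have t2 : |a1 - fstCoord k v| = |fstCoord k v - a1| := abs_sub_comm _ _
      linarith
    have e2 : ‖sndCoord k u - sndCoord k v‖ ≤ 6 * L * r := by
      have t1 := norm_add_le (sndCoord k u - a2) (a2 - sndCoord k v)
      rw [sub_add_sub_cancel] at t1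
      have t2 : ‖a2 - sndCoord k v‖ = ‖sndCoord k v - a2‖ := norm_sub_rev _ _
      linarith
    linarith
  intro x hx hxy hxz
  obtain ⟨hx1, hx2⟩ := hfr_box x hx
  have hxyb : ‖x - y‖ ≤ 8 * L * r := by
    have := hdiam x y hx hyA.2; linarith
  have hxzb : ‖x - z‖ ≤ 8 * L * r := by
    have := hdiam x z hx hzA.2; linarith
  -- nearest point
  obtain ⟨p, hpA, hpd⟩ := hA.exists_infDist_eq_dist ⟨a, ha⟩ x
  set d := Metric.infDist x A with hd
  have hdxp : ‖x - p‖ = d := by rw [hpd, dist_eq_norm]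
  have hd0 : 0 ≤ d := Metric.infDist_nonneg
  have hdy : d ≤ ‖x - y‖ := by
    rw [hd, ← dist_eq_norm]; exact Metric.infDist_le_dist_of_mem hyA.1
  have hdz : d ≤ ‖x - z‖ := by
    rw [hd, ← dist_eq_norm]; exact Metric.infDist_le_dist_of_mem hzA.1
  -- d is positive
  have hdpos : 0 < d := by
    rcases hd0.lt_or_eq with h | h
    · exact h
    exfalso
    have hxA : x ∈ A := by
      have : x ∈ closure A := (Metric.mem_closure_iff_infDist_zero ⟨a, ha⟩).mpr h.symm
      rwa [hA.isClosed.closure_eq] at this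
    have hxCyl : x ∈ A ∩ Cyl k a R (3 * L * R) := by
      refine ⟨hxA, ?_, ?_⟩
      · exact lt_of_le_of_lt hx1 hrR
      · refine lt_of_le_of_lt hx2 ?_
        have := mul_pos hL0 (by linarith : (0:ℝ) < R - r)
        nlinarith
    rw [hgraph] at hxCyl
    obtain ⟨hxR, hxg⟩ := hxCyl
    have hlip : ‖sndCoord k x - a2‖ ≤ L * |fstCoord k x - a1| := by
      rw [hxg, haGraph]
      exact hφLip _ (hIoo _ hxR) _ (hIoo _ (by simpa using hR))
    have hge : r ≤ |fstCoord k x - a1| := by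
      by_contra hcon
      push_neg at hcon
      have h1 := mul_lt_mul_of_pos_left hcon hL0
      have h2 := mul_pos hL0 hr0
      exact hfr_notin x hx ⟨hcon, by linarith⟩
    have heq : |fstCoord k x - a1| = r := le_antisymm hx1 hge
    rcases (abs_eq hr0.le).mp heq with hplus | hminus
    · apply hxz
      refine ext_coords hk0 ?_ ?_
      · rw [hz1]; linarith
      · rw [hz2, hxg, show fstCoord k x = a1 + r from by linarith]
    · apply hxy
      refine ext_coords hk0 ?_ ?_
      · rw [hy1]; linarith
      · rw [hy2, hxg, show fstCoord k x = a1 - r from by linarith]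
  -- key claim
  have hclaim : ‖x - y‖ ≤ 8 * L * d ∨ ‖x - z‖ ≤ 8 * L * d := by
    rcases le_or_gt r d with hcase | hcase
    · left
      have := mul_le_mul_of_nonneg_left hcase (by positivity : (0:ℝ) ≤ 8 * L)
      linarith
    · -- d < r : nearest point is a graph point near a
      have hpx1 : |fstCoord k p - fstCoord k x| ≤ d := by
        have h0 := abs_fst_le hk0 (p - x)
        rw [fstCoord_sub, norm_sub_rev p x, hdxp] at h0
        exact h0
      have hpx2 : ‖sndCoord k p - sndCoord k x‖ ≤ d := by
        have h0 := norm_snd_le hk0 (p - x)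
        rw [sndCoord_sub] at h0
        rw [show ‖p - x‖ = d from by rw [norm_sub_rev p x, hdxp]] at h0
        exact h0
      have hp1 : |fstCoord k p - a1| < R := by
        have t := abs_sub_le (fstCoord k p) (fstCoord k x) a1
        linarith
      have hp2 : ‖sndCoord k p - a2‖ < 3 * L * R := by
        have t1 := norm_add_le (sndCoord k p - sndCoord k x) (sndCoord k x - a2)
        rw [sub_add_sub_cancel] at t1
        have t2 := mul_pos (by linarith : (0:ℝ) < 3 * L - 1) hR
        linarith
      have hpG : sndCoord k p = φ (fstCoord k p) := by
        have hmem : p ∈ A ∩ Cyl k a R (3 * L * R) := ⟨hpA, hp1, hp2⟩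
        rw [hgraph] at hmem
        exact hmem.2
      have hpIoo := hIoo _ hp1
      set p1 := fstCoord k p with hp1d
      have hLd : (0:ℝ) ≤ (7 * L - 2) * d := by
        apply mul_nonneg (by linarith) hd0
      rcases le_or_gt r (p1 - a1) with hA1 | hA1
      · -- p to the right: compare with z
        right
        have hzIoo : a1 + r ∈ Set.Ioo (a1 - R) (a1 + R) := ⟨by linarith, by linarith⟩
        have hlipz : ‖φ p1 - φ (a1 + r)‖ ≤ L * |p1 - (a1 + r)| :=
          hφLip _ hpIoo _ hzIoo
        have habs1 : |p1 - (a1 + r)| ≤ d := by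
          have hxle : fstCoord k x ≤ a1 + r := by
            have := abs_le.mp hx1; linarith [this.2]
          rcases le_or_gt 0 (p1 - (a1 + r)) with h | h
          · rw [abs_of_nonneg h]
            have := abs_le.mp hpx1
            linarith [this.2]
          · rw [abs_of_neg h]; linarith
        have hpz : ‖p - z‖ ≤ (1 + L) * d := by
          have h0 := norm_le_fst_add_snd hk0 (p - z)
          rw [fstCoord_sub, sndCoord_sub, hz1, hz2, hpG] at h0
          have h1 : L * |p1 - (a1 + r)| ≤ L * d :=
            mul_le_mul_of_nonneg_left habs1 hL0.le
          linarith
        have h0 := norm_add_le (x - p) (p - z)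
        rw [sub_add_sub_cancel] at h0
        linarith
      rcases le_or_gt (p1 - a1) (-r) with hA2 | hA2
      · -- p to the left: compare with y
        left
        have hyIoo : a1 - r ∈ Set.Ioo (a1 - R) (a1 + R) := ⟨by linarith, by linarith⟩
        have hlipy : ‖φ p1 - φ (a1 - r)‖ ≤ L * |p1 - (a1 - r)| :=
          hφLip _ hpIoo _ hyIoo
        have habs1 : |p1 - (a1 - r)| ≤ d := by
          have hxge : a1 - r ≤ fstCoord k x := by
            have := abs_le.mp hx1; linarith [this.1]
          rcases le_or_gt 0 (p1 - (a1 - r)) with h | h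
          · rw [abs_of_nonneg h]
            linarith
          · rw [abs_of_neg h]
            have := abs_le.mp hpx1
            linarith [this.1]
        have hpy : ‖p - y‖ ≤ (1 + L) * d := by
          have h0 := norm_le_fst_add_snd hk0 (p - y)
          rw [fstCoord_sub, sndCoord_sub, hy1, hy2, hpG] at h0
          have h1 : L * |p1 - (a1 - r)| ≤ L * d :=
            mul_le_mul_of_nonneg_left habs1 hL0.le
          linarith
        have h0 := norm_add_le (x - p) (p - y)
        rw [sub_add_sub_cancel] at h0
        linarith
      · -- |p1 - a1| < r : use that x is outside the inner box
        have hlipa : ‖φ p1 - φ a1‖ ≤ L * |p1 - a1| :=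
          hφLip _ hpIoo _ (hIoo _ (by simpa using hR))
        have habs : |p1 - a1| < r := abs_lt.mpr ⟨by linarith, hA1⟩
        have hnot := hfr_notin x hx
        rw [not_and_or] at hnot
        rcases hnot with h | h
        · -- |x1 - a1| = r
          have heq : |fstCoord k x - a1| = r := le_antisymm hx1 (not_lt.mp h)
          rcases (abs_eq hr0.le).mp heq with hplus | hminus
          · -- x1 = a1 + r : compare with z
            right
            have hzIoo : a1 + r ∈ Set.Ioo (a1 - R) (a1 + R) := ⟨by linarith, by linarith⟩
            have hlipz : ‖φ p1 - φ (a1 + r)‖ ≤ L * |p1 - (a1 + r)| :=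
              hφLip _ hpIoo _ hzIoo
            have habs1 : |p1 - (a1 + r)| ≤ d := by
              have heq2 : p1 - (a1 + r) = p1 - fstCoord k x := by linarith
              rw [heq2]
              exact hpx1
            have h0 := norm_le_fst_add_snd hk0 (x - z)
            rw [fstCoord_sub, sndCoord_sub, hz1, hz2] at h0
            have e1 : |fstCoord k x - (a1 + r)| = 0 := by
              rw [abs_eq_zero]; linarith
            have e2 : ‖sndCoord k x - φ (a1 + r)‖ ≤
                ‖sndCoord k x - sndCoord k p‖ + ‖φ p1 - φ (a1 + r)‖ := by
              have t := norm_add_le (sndCoord k x - sndCoord k p) (sndCoord k p - φ (a1 + r))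
              rw [sub_add_sub_cancel] at t
              calc ‖sndCoord k x - φ (a1 + r)‖
                  ≤ ‖sndCoord k x - sndCoord k p‖ + ‖sndCoord k p - φ (a1 + r)‖ := t
                _ = ‖sndCoord k x - sndCoord k p‖ + ‖φ p1 - φ (a1 + r)‖ := by rw [hpG]
            have e3 : ‖sndCoord k x - sndCoord k p‖ = ‖sndCoord k p - sndCoord k x‖ :=
              norm_sub_rev _ _
            have e4 : L * |p1 - (a1 + r)| ≤ L * d :=
              mul_le_mul_of_nonneg_left habs1 hL0.le
            linarith
          · -- x1 = a1 - r : compare with y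
            left
            have hyIoo : a1 - r ∈ Set.Ioo (a1 - R) (a1 + R) := ⟨by linarith, by linarith⟩
            have hlipy : ‖φ p1 - φ (a1 - r)‖ ≤ L * |p1 - (a1 - r)| :=
              hφLip _ hpIoo _ hyIoo
            have habs1 : |p1 - (a1 - r)| ≤ d := by
              have heq2 : p1 - (a1 - r) = p1 - fstCoord k x := by linarith
              rw [heq2]
              exact hpx1
            have h0 := norm_le_fst_add_snd hk0 (x - y)
            rw [fstCoord_sub, sndCoord_sub, hy1, hy2] at h0
            have e1 : |fstCoord k x - (a1 - r)| = 0 := by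
              rw [abs_eq_zero]; linarith
            have e2 : ‖sndCoord k x - φ (a1 - r)‖ ≤
                ‖sndCoord k x - sndCoord k p‖ + ‖φ p1 - φ (a1 - r)‖ := by
              have t := norm_add_le (sndCoord k x - sndCoord k p) (sndCoord k p - φ (a1 - r))
              rw [sub_add_sub_cancel] at t
              calc ‖sndCoord k x - φ (a1 - r)‖
                  ≤ ‖sndCoord k x - sndCoord k p‖ + ‖sndCoord k p - φ (a1 - r)‖ := t
                _ = ‖sndCoord k x - sndCoord k p‖ + ‖φ p1 - φ (a1 - r)‖ := by rw [hpG]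
            have e3 : ‖sndCoord k x - sndCoord k p‖ = ‖sndCoord k p - sndCoord k x‖ :=
              norm_sub_rev _ _
            have e4 : L * |p1 - (a1 - r)| ≤ L * d :=
              mul_le_mul_of_nonneg_left habs1 hL0.le
            linarith
        · -- ‖x2 - a2‖ ≥ 2Lr : contradiction with d < r
          exfalso
          push_neg at h
          have t1 := norm_add_le (sndCoord k x - sndCoord k p) (sndCoord k p - a2)
          rw [sub_add_sub_cancel] at t1
          have t2 : ‖sndCoord k p - a2‖ ≤ L * r := by
            rw [hpG, haGraph]
            calc ‖φ p1 - φ a1‖ ≤ L * |p1 - a1| := hlipa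
            _ ≤ L * r := mul_le_mul_of_nonneg_left habs.le hL0.le
          have t3 : ‖sndCoord k x - sndCoord k p‖ = ‖sndCoord k p - sndCoord k x‖ :=
            norm_sub_rev _ _
          linarith
  -- assemble
  have h8L : (0:ℝ) < 8 * L := by linarith
  have h8Lrα := mul_lt_mul_of_pos_left hrα h8L
  have hyne : (0:ℝ) < ‖x - y‖ := by
    rw [norm_pos_iff, sub_ne_zero]; exact hxy
  have hzne : (0:ℝ) < ‖x - z‖ := by
    rw [norm_pos_iff, sub_ne_zero]; exact hxz
  have hymem : ‖x - y‖ / (8 * L) ∈ Set.Ioo (0:ℝ) α := by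
    constructor
    · positivity
    · rw [div_lt_iff₀ h8L]; linarith
  have hzmem : ‖x - z‖ / (8 * L) ∈ Set.Ioo (0:ℝ) α := by
    constructor
    · positivity
    · rw [div_lt_iff₀ h8L]; linarith
  have hrmem : r ∈ Set.Ioo (0:ℝ) α := ⟨hr0, hrα⟩
  have hdmem : d ∈ Set.Ioo (0:ℝ) α := ⟨hdpos, by linarith⟩
  have hgrz : g r ≤ g (‖x - z‖ / (8 * L)) := by
    apply hgdec hzmem hrmem
    rw [div_le_iff₀ h8L]; linarith
  have hgry : g r ≤ g (‖x - y‖ / (8 * L)) := by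
    apply hgdec hymem hrmem
    rw [div_le_iff₀ h8L]; linarith
  rcases hclaim with hc | hc
  · have h1 : g d ≤ g (‖x - y‖ / (8 * L)) := by
      apply hgdec hymem hdmem
      rw [div_le_iff₀ h8L]; linarith
    linarith
  · have h1 : g d ≤ g (‖x - z‖ / (8 * L)) := by
      apply hgdec hzmem hdmem
      rw [div_le_iff₀ h8L]; linarith
    linarith
end
end

section
/- Let k ≥ 2, let Ω ⊂ ℝ^k be a bounded open set, let F : Ω → [0,∞] be upper semicontinuous, and fix a > 1. Let u : Ω → ℝ be a subharmonic function with u ≤ F on Ω, and for ν ∈ ℝ set E_ν = {x ∈ Ω : a^ν ≤ u(x) < a^{ν+1}} and ℓ_ν = m(E_ν). Let D > 0 and let λ be a positive integer such that a/(D^k·S₁) + a^{−λ} ≤ 1, where S₁ is the Lebesgue volume of the unit ball of ℝ^k. Suppose that for some ν > λ and some x_ν ∈ Ω one has u(x_ν) ≥ a^ν and B(x_ν, R) ⊆ Ω, where R > D·(ℓ_{ν−λ} + ℓ_{ν−λ+1} + ⋯ + ℓ_ν)^{1/k}. Then there exists x_{ν+1} ∈ B(x_ν, R) with u(x_{ν+1})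 ≥ a^{ν+1}. -/
open MeasureTheory Metric Set Filter

noncomputable section

/-- The volume S₁ of the unit ball of ℝ^k. -/
def unitBallVol (k : ℕ) : ℝ := (volume (Metric.ball (0 : EuclideanSpace ℝ (Fin k)) 1)).toReal

/-- If `a^c ≤ t < a^(c + (n+1))` then `t` lies in one of the dyadic-type slots. -/
lemma exists_slot (a t c : ℝ) (n : ℕ) (h1 : a ^ c ≤ t) (h2 : t < a ^ (c + (n : ℝ) + 1)) :
    ∃ j ∈ Finset.range (n + 1), a ^ (c + (j : ℝ)) ≤ t ∧ t < a ^ (c + (j : ℝ) + 1) := by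
  induction n with
  | zero =>
    refine ⟨0, Finset.mem_range.mpr (by omega), by simpa using h1, ?_⟩
    push_cast at h2 ⊢
    simpa using h2
  | succ n ih =>
    by_cases hc : t < a ^ (c + (n : ℝ) + 1)
    · obtain ⟨j, hj, hj1, hj2⟩ := ih hc
      exact ⟨j, Finset.mem_range.mpr (by have := Finset.mem_range.mp hj; omega), hj1, hj2⟩
    · refine ⟨n + 1, Finset.mem_range.mpr (by omega), ?_, ?_⟩
      · have he : c + ((n : ℝ) + 1) = c + (n : ℝ) + 1 := by ring
        push_cast
        rw [he]
        exact not_lt.mp hc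
      · have he : c + ((n : ℝ) + 1) + 1 = c + (n : ℝ) + 1 + 1 := by ring
        push_cast at h2 ⊢
        rw [he]
        push_cast at h2
        convert h2 using 3
        ring

/-- Domar's Lemma 1, quantitative form: propagation of the level sets of a
subharmonic function dominated by F. -/
theorem stmt_12 {k : ℕ} (hk : 2 ≤ k)
    (Ω : Set (EuclideanSpace ℝ (Fin k))) (hΩo : IsOpen Ω) (hΩb : Bornology.IsBounded Ω)
    (F : EuclideanSpace ℝ (Fin k) → EReal) (hF : UpperSemicontinuousOn F Ω)
    (hF0 : ∀ x ∈ Ω, 0 ≤ F x)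
    (a : ℝ) (ha : 1 < a)
    (u : EuclideanSpace ℝ (Fin k) → ℝ) (hu : SubharmonicOn u Ω)
    (huF : ∀ x ∈ Ω, (u x : EReal) ≤ F x)
    (ℓ : ℝ → ℝ)
    (hℓ : ∀ ν : ℝ, ℓ ν = (volume {x ∈ Ω | a ^ ν ≤ u x ∧ u x < a ^ (ν + 1)}).toReal)
    (D : ℝ) (hD : 0 < D) (lam : ℕ) (hlam : 0 < lam)
    (hDlam : a / (D ^ k * unitBallVol k) + a ^ (-(lam : ℝ)) ≤ 1)
    (ν : ℝ) (hν : (lam : ℝ) < ν)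
    (xν : EuclideanSpace ℝ (Fin k)) (hxν : xν ∈ Ω) (huxν : a ^ ν ≤ u xν)
    (R : ℝ) (hRΩ : Metric.ball xν R ⊆ Ω)
    (hRgt : D * (∑ j ∈ Finset.range (lam + 1), ℓ (ν - lam + j)) ^ (1 / (k : ℝ)) < R) :
    ∃ x' ∈ Metric.ball xν R, a ^ (ν + 1) ≤ u x' := by
  haveI : Nontrivial (EuclideanSpace ℝ (Fin k)) :=
    Module.nontrivial_of_finrank_pos (R := ℝ) (by rw [finrank_euclideanSpace_fin]; omega)
  by_contra hcon
  push_neg at hcon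
  have ha0 : (0 : ℝ) < a := lt_trans one_pos ha
  have hk0 : k ≠ 0 := by omega
  -- basic positivity facts
  have hS : 0 < unitBallVol k := by
    rw [unitBallVol]
    exact ENNReal.toReal_pos (measure_ball_pos volume _ one_pos).ne'
      (measure_ball_lt_top).ne
  set L : ℝ := ∑ j ∈ Finset.range (lam + 1), ℓ (ν - lam + j) with hLdef
  have hℓnn : ∀ ν' : ℝ, 0 ≤ ℓ ν' := fun ν' => by rw [hℓ]; exact ENNReal.toReal_nonneg
  have hLnn : 0 ≤ L := Finset.sum_nonneg fun j _ => hℓnn _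
  have hLk : 0 ≤ L ^ (1 / (k : ℝ)) := Real.rpow_nonneg hLnn _
  have hR0 : 0 < R := lt_of_le_of_lt (by positivity) hRgt
  -- choose radius r
  set r : ℝ := (D * L ^ (1 / (k : ℝ)) + R) / 2 with hrdef
  have hr1 : D * L ^ (1 / (k : ℝ)) < r := by rw [hrdef]; linarith
  have hrR : r < R := by rw [hrdef]; linarith
  have hr0 : 0 < r := lt_of_lt_of_le (by positivity : (0:ℝ) < R / 2) (by rw [hrdef]; nlinarith [mul_nonneg hD.le hLk])
  set B := Metric.ball xν r with hBdef
  have hBsub : B ⊆ Metric.ball xν R := ball_subset_ball hrR.le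
  have hBΩ : B ⊆ Ω := hBsub.trans hRΩ
  have hcb : Metric.closedBall xν r ⊆ Ω := (closedBall_subset_ball hrR).trans hRΩ
  -- volume of B
  have hmB : (volume B).toReal = r ^ k * unitBallVol k := by
    rw [hBdef, Measure.addHaar_ball _ _ hr0.le, finrank_euclideanSpace_fin, ENNReal.toReal_mul,
      ENNReal.toReal_ofReal (by positivity), unitBallVol]
  set m : ℝ := (volume B).toReal with hmdef
  have hm0 : 0 < m := by rw [hmB]; positivity
  -- the superlevel set T
  set c : ℝ := ν - lam with hcdef
  have hVopen : IsOpen {x ∈ Ω | u x < a ^ c} := by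
    rw [isOpen_iff_mem_nhds]
    rintro x ⟨hxΩ, hxu⟩
    have := hu.1 x hxΩ (a ^ c) hxu
    rw [hΩo.nhdsWithin_eq hxΩ] at this
    filter_upwards [this, hΩo.mem_nhds hxΩ] with y h1 h2
    exact ⟨h2, h1⟩
  set T : Set (EuclideanSpace ℝ (Fin k)) := Ω \ {x ∈ Ω | u x < a ^ c} with hTdef
  have hTmeas : MeasurableSet T := hΩo.measurableSet.diff hVopen.measurableSet
  have hTmem : ∀ x, x ∈ T ↔ x ∈ Ω ∧ a ^ c ≤ u x := by
    intro x
    simp only [hTdef, mem_diff, mem_setOf_eq, not_and, not_lt]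
    constructor
    · rintro ⟨h1, h2⟩; exact ⟨h1, h2 h1⟩
    · rintro ⟨h1, h2⟩; exact ⟨h1, fun _ => h2⟩
  -- T ∩ B has measure at most L
  have hΩfin : volume Ω < ⊤ := hΩb.measure_lt_top
  have hTB : (volume (T ∩ B)).toReal ≤ L := by
    have hsub : T ∩ B ⊆ ⋃ j ∈ Finset.range (lam + 1),
        {x ∈ Ω | a ^ (c + (j : ℝ)) ≤ u x ∧ u x < a ^ (c + (j : ℝ) + 1)} := by
      rintro x ⟨hxT, hxB⟩
      have hxΩ := hBΩ hxB
      have h1 : a ^ c ≤ u x := ((hTmem x).mp hxT).2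
      have h2 : u x < a ^ (c + (lam : ℝ) + 1) := by
        have : u x < a ^ (ν + 1) := hcon x (hBsub hxB)
        have he : c + (lam : ℝ) + 1 = ν + 1 := by rw [hcdef]; ring
        rwa [he]
      obtain ⟨j, hj, hj1, hj2⟩ := exists_slot a (u x) c lam h1 h2
      exact mem_biUnion hj ⟨hxΩ, hj1, hj2⟩
    calc (volume (T ∩ B)).toReal
        ≤ (∑ j ∈ Finset.range (lam + 1),
            volume {x ∈ Ω | a ^ (c + (j : ℝ)) ≤ u x ∧ u x < a ^ (c + (j : ℝ) + 1)}).toReal := by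
          apply ENNReal.toReal_mono
          · exact (ENNReal.sum_lt_top.mpr fun j _ =>
              lt_of_le_of_lt (measure_mono (sep_subset _ _)) hΩfin).ne
          · exact le_trans (measure_mono hsub) (measure_biUnion_finset_le _ _)
      _ = ∑ j ∈ Finset.range (lam + 1), ℓ (ν - lam + j) := by
          rw [ENNReal.toReal_sum (fun j _ =>
            (lt_of_le_of_lt (measure_mono (sep_subset _ _)) hΩfin).ne)]
          refine Finset.sum_congr rfl fun j _ => ?_
          rw [hℓ]
      _ = L := by rw [hLdef]
  -- the mean value inequality
  have hmean : a ^ ν ≤ ⨍ y in B, u y := le_trans huxν (hu.2 xν hxν r hr0 hcb)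
  rw [setAverage_eq, measureReal_def, ← hmdef, smul_eq_mul] at hmean
  by_cases hint : IntegrableOn u B volume
  · -- compare u with the auxiliary dominating function g
    set g : EuclideanSpace ℝ (Fin k) → ℝ :=
      fun x => a ^ c + T.indicator (fun _ => a ^ (ν + 1)) x with hgdef
    have hgle : ∀ x ∈ B, u x ≤ g x := by
      intro x hxB
      by_cases hx : a ^ c ≤ u x
      · have hxT : x ∈ T := (hTmem x).mpr ⟨hBΩ hxB, hx⟩
        have := (hcon x (hBsub hxB)).le
        have hcpos : 0 < a ^ c := Real.rpow_pos_of_pos ha0 _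
        simp only [hgdef, indicator_of_mem hxT]
        linarith
      · have hxT : x ∉ T := fun hxT => hx ((hTmem x).mp hxT).2
        simp only [hgdef, indicator_of_notMem hxT]
        linarith [not_le.mp hx]
    have hgint : IntegrableOn g B volume := by
      have hBfin : volume B < ⊤ := measure_ball_lt_top
      apply Integrable.add
      · exact (integrableOn_const_iff).mpr (Or.inr hBfin)
      · exact ((integrableOn_const_iff).mpr (Or.inr hBfin)).indicator hTmeas
    have hgint' : ∫ y in B, g y ≤ a ^ c * m + a ^ (ν + 1) * L := by
      rw [hgdef]
      rw [integral_add ((integrableOn_const_iff (C := a ^ c)).mpr (Or.inr measure_ball_lt_top))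
        (((integrableOn_const_iff (C := a ^ (ν + 1))).mpr (Or.inr measure_ball_lt_top)).indicator hTmeas)]
      rw [setIntegral_const, setIntegral_indicator hTmeas, setIntegral_const]
      rw [smul_eq_mul, smul_eq_mul, measureReal_def, measureReal_def, ← hmdef]
      have h1 : (volume (B ∩ T)).toReal ≤ L := by rwa [inter_comm] at hTB
      have h2 : (0:ℝ) < a ^ (ν + 1) := Real.rpow_pos_of_pos ha0 _
      have h3 := mul_le_mul_of_nonneg_right h1 h2.le
      nlinarith [h3]
    have hintle : ∫ y in B, u y ≤ a ^ c * m + a ^ (ν + 1) * L :=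
      le_trans (setIntegral_mono_on hint hgint measurableSet_ball hgle) hgint'
    -- main numeric inequality
    have hkey : a ^ ν ≤ a ^ c + a ^ (ν + 1) * L / m := by
      have := mul_le_mul_of_nonneg_left hintle (inv_nonneg.mpr hm0.le)
      calc a ^ ν ≤ m⁻¹ * ∫ y in B, u y := hmean
        _ ≤ m⁻¹ * (a ^ c * m + a ^ (ν + 1) * L) := this
        _ = a ^ c + a ^ (ν + 1) * L / m := by field_simp
    -- derive a contradiction from hDlam
    have haux : a ^ (ν + 1) / (D ^ k * unitBallVol k) + a ^ c ≤ a ^ ν := by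
      have h1 := mul_le_mul_of_nonneg_left hDlam (Real.rpow_pos_of_pos ha0 ν).le
      have e1 : a ^ ν * (a / (D ^ k * unitBallVol k)) = a ^ (ν + 1) / (D ^ k * unitBallVol k) := by
        rw [Real.rpow_add_one ha0.ne']
        ring
      have e2 : a ^ ν * a ^ (-(lam : ℝ)) = a ^ c := by
        rw [← Real.rpow_add ha0, hcdef, ← sub_eq_add_neg]
      calc a ^ (ν + 1) / (D ^ k * unitBallVol k) + a ^ c
          = a ^ ν * (a / (D ^ k * unitBallVol k) + a ^ (-(lam : ℝ))) := by rw [mul_add, e1, e2]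
        _ ≤ a ^ ν * 1 := h1
        _ = a ^ ν := mul_one _
    have hDk : (0:ℝ) < D ^ k * unitBallVol k := by positivity
    have haν1 : (0:ℝ) < a ^ (ν + 1) := Real.rpow_pos_of_pos ha0 _
    rcases eq_or_lt_of_le hLnn with hL0 | hLpos
    · -- L = 0 case
      rw [← hL0] at hkey
      have : a ^ (ν + 1) / (D ^ k * unitBallVol k) > 0 := by positivity
      simp only [mul_zero, zero_div, add_zero] at hkey
      linarith
    · -- L > 0 case
      have hrk : D ^ k * L < r ^ k := by
        have h1 : (D * L ^ (1 / (k : ℝ))) ^ k < r ^ k := by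
          apply pow_lt_pow_left₀ hr1 (by positivity) hk0
        have h2 : (L ^ (1 / (k : ℝ))) ^ k = L := by
          rw [← Real.rpow_natCast (L ^ (1 / (k : ℝ))) k, ← Real.rpow_mul hLnn]
          rw [one_div, inv_mul_cancel₀ (by exact_mod_cast hk0 : (k:ℝ) ≠ 0), Real.rpow_one]
        calc D ^ k * L = (D * L ^ (1 / (k : ℝ))) ^ k := by rw [mul_pow, h2]
          _ < r ^ k := h1
      have hstrict : a ^ (ν + 1) * L / m < a ^ (ν + 1) / (D ^ k * unitBallVol k) := by
        rw [div_lt_div_iff₀ hm0 hDk, hmB]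
        have h3 : (0:ℝ) < a ^ (ν + 1) * unitBallVol k := by positivity
        calc a ^ (ν + 1) * L * (D ^ k * unitBallVol k)
            = (L * D ^ k) * (a ^ (ν + 1) * unitBallVol k) := by ring
          _ < r ^ k * (a ^ (ν + 1) * unitBallVol k) := by
              apply mul_lt_mul_of_pos_right _ h3
              linarith [hrk]
          _ = a ^ (ν + 1) * (r ^ k * unitBallVol k) := by ring
      linarith
  · -- u is not integrable on B: then the average is 0, contradiction
    rw [integral_undef hint, mul_zero] at hmean
    exact absurd hmean (not_le.mpr (Real.rpow_pos_of_pos ha0 ν))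
end
end

section
/- Let k ≥ 2, let Ω ⊂ ℝ^k be a bounded open set, let F : Ω → [0,∞] be upper semicontinuous, and fix a > 1. Let q ∈ (0,k) and p = k − q. For ν > 0 set F_ν = {x ∈ Ω : F(x) ≥ a^ν} and μ_q(ν) = sup{ m(F_ν ∩ B(x,R))/R^p : B(x,R) ⊆ Ω }. Let D > 0 and let λ be a positive integer such that a/(D^q·S₁) + a^{−λ} ≤ 1, where S₁ is the volume of the unit ball of ℝ^k. Let u : Ω → ℝ be subharmonic with u ≤ F on Ω, and suppose that for some ν > λ and x_ν ∈ Ω one has u(x_ν) ≥ a^ν and B(x_ν,R) ⊆ Ω, where R > D·(μ_q(ν−λ))^{1/q}. Then there exists x_{ν+1} ∈ B(x_ν,R) with u(x_{ν+1}) ≥ a^{ν+1}. -/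
open MeasureTheory Metric Set Filter

noncomputable section

/-- The set of ratios m(F_ν ∩ B(x,R))/R^p over balls B(x,R) ⊆ Ω, where
F_ν = {x ∈ Ω : F(x) ≥ a^ν}; its supremum is μ_q(ν) (p = k − q). -/
def muRatioSet {k : ℕ} (Ω : Set (EuclideanSpace ℝ (Fin k)))
    (F : EuclideanSpace ℝ (Fin k) → EReal) (a p ν : ℝ) : Set ℝ :=
  {c : ℝ | ∃ (x : EuclideanSpace ℝ (Fin k)) (R : ℝ), 0 < R ∧ Metric.ball x R ⊆ Ω ∧
    c = (volume ({y ∈ Ω | ((a ^ ν : ℝ) : EReal) ≤ F y} ∩ Metric.ball x R)).toReal / R ^ p}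

/-- μ_q(ν) = sup over balls B(x,R) ⊆ Ω of m(F_ν ∩ B(x,R))/R^p. -/
def muQ {k : ℕ} (Ω : Set (EuclideanSpace ℝ (Fin k)))
    (F : EuclideanSpace ℝ (Fin k) → EReal) (a p ν : ℝ) : ℝ :=
  sSup (muRatioSet Ω F a p ν)

set_option maxHeartbeats 1000000 in
/-- Lemma 4.6, Domar's Lemma 2 analogue: propagation of level sets with
the μ_q majorant. -/
theorem stmt_15 {k : ℕ} (hk : 2 ≤ k)
    (Ω : Set (EuclideanSpace ℝ (Fin k))) (hΩo : IsOpen Ω) (hΩb : Bornology.IsBounded Ω)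
    (F : EuclideanSpace ℝ (Fin k) → EReal) (hF : UpperSemicontinuousOn F Ω)
    (hF0 : ∀ x ∈ Ω, 0 ≤ F x)
    (a : ℝ) (ha : 1 < a)
    (q : ℝ) (hq0 : 0 < q) (hqk : q < (k : ℝ))
    (D : ℝ) (hD : 0 < D) (lam : ℕ) (hlam : 0 < lam)
    (hDlam : a / (D ^ q * unitBallVol k) + a ^ (-(lam : ℝ)) ≤ 1)
    (u : EuclideanSpace ℝ (Fin k) → ℝ) (hu : SubharmonicOn u Ω)
    (huF : ∀ x ∈ Ω, (u x : EReal) ≤ F x)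
    (ν : ℝ) (hν : (lam : ℝ) < ν)
    (xν : EuclideanSpace ℝ (Fin k)) (hxν : xν ∈ Ω) (huxν : a ^ ν ≤ u xν)
    (R : ℝ) (hRΩ : Metric.ball xν R ⊆ Ω)
    (hRgt : D * (muQ Ω F a ((k : ℝ) - q) (ν - lam)) ^ (1 / q) < R) :
    ∃ x' ∈ Metric.ball xν R, a ^ (ν + 1) ≤ u x' := by
  classical
  have hk0 : 0 < k := lt_of_lt_of_le two_pos hk
  haveI : Nonempty (Fin k) := Fin.pos_iff_nonempty.mp hk0
  haveI : Nontrivial (EuclideanSpace ℝ (Fin k)) := inferInstance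
  set p : ℝ := (k : ℝ) - q with hp
  have hp0 : 0 < p := by simp only [hp]; linarith
  have ha0 : (0:ℝ) < a := lt_trans one_pos ha
  have hS1pos : 0 < unitBallVol k :=
    ENNReal.toReal_pos (measure_ball_pos _ _ one_pos).ne' measure_ball_lt_top.ne
  set S1 := unitBallVol k with hS1def
  have hballvolR : ∀ (x : EuclideanSpace ℝ (Fin k)) (r : ℝ), 0 ≤ r →
      (volume (ball x r)).toReal = r ^ k * S1 := by
    intro x r hr
    have hb : volume (ball x r) = ENNReal.ofReal (r ^ k) *
        volume (ball (0 : EuclideanSpace ℝ (Fin k)) 1) := by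
      simpa [finrank_euclideanSpace_fin] using Measure.addHaar_ball volume x hr
    rw [hb, ENNReal.toReal_mul, ENNReal.toReal_ofReal (by positivity)]
    rfl
  set μ := muQ Ω F a p (ν - lam) with hμdef
  have hμnonneg : 0 ≤ μ := by
    apply Real.sSup_nonneg
    rintro c ⟨x, R', hR', _, rfl⟩
    exact div_nonneg ENNReal.toReal_nonneg (Real.rpow_nonneg hR'.le p)
  have hΩvol : volume Ω < ⊤ := hΩb.measure_lt_top
  have hbdd : BddAbove (muRatioSet Ω F a p (ν - lam)) := by
    refine ⟨S1 * ((volume Ω).toReal / S1) ^ (q / (k:ℝ)), ?_⟩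
    rintro c ⟨x, R', hR', hball, rfl⟩
    have hvB : (volume (ball x R')).toReal = R' ^ k * S1 := hballvolR x R' hR'.le
    have hvle : R' ^ k * S1 ≤ (volume Ω).toReal := by
      rw [← hvB]
      exact ENNReal.toReal_mono hΩvol.ne (measure_mono hball)
    have hRk : R' ^ ((k:ℝ)) ≤ (volume Ω).toReal / S1 := by
      rw [Real.rpow_natCast]
      exact (le_div_iff₀ hS1pos).mpr hvle
    have hnum : (volume ({y ∈ Ω | ((a ^ (ν - (lam:ℝ)) : ℝ) : EReal) ≤ F y} ∩ ball x R')).toReal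
        ≤ R' ^ k * S1 := by
      rw [← hvB]
      exact ENNReal.toReal_mono measure_ball_lt_top.ne (measure_mono inter_subset_right)
    have hRp : (0:ℝ) < R' ^ p := Real.rpow_pos_of_pos hR' p
    calc (volume ({y ∈ Ω | ((a ^ (ν - (lam:ℝ)) : ℝ) : EReal) ≤ F y} ∩ ball x R')).toReal / R' ^ p
        ≤ (R' ^ k * S1) / R' ^ p := (div_le_div_iff_of_pos_right hRp).mpr hnum
      _ = S1 * R' ^ q := by
          rw [mul_comm, mul_div_assoc, ← Real.rpow_natCast R' k, ← Real.rpow_sub hR']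
          congr 1
          simp [hp]
      _ = S1 * (R' ^ ((k:ℝ))) ^ (q / (k:ℝ)) := by
          rw [← Real.rpow_mul hR'.le]
          congr 1
          field_simp
      _ ≤ S1 * ((volume Ω).toReal / S1) ^ (q / (k:ℝ)) := by
          refine mul_le_mul_of_nonneg_left ?_ hS1pos.le
          exact Real.rpow_le_rpow (Real.rpow_nonneg hR'.le _) hRk (by positivity)
  by_contra hcon
  push_neg at hcon
  set r : ℝ := (D * μ ^ (1/q) + R) / 2 with hrdef
  have hDμ0 : 0 ≤ D * μ ^ (1/q) := mul_nonneg hD.le (Real.rpow_nonneg hμnonneg _)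
  have hr1 : D * μ ^ (1/q) < r := by rw [hrdef]; linarith
  have hr2 : r < R := by rw [hrdef]; linarith
  have hr0 : 0 < r := lt_of_le_of_lt hDμ0 hr1
  have hBsubR : ball xν r ⊆ ball xν R := ball_subset_ball hr2.le
  have hBsubΩ : ball xν r ⊆ Ω := hBsubR.trans hRΩ
  have hmean := hu.2 xν hxν r hr0 ((closedBall_subset_ball hr2).trans hRΩ)
  set B := ball xν r with hBdef
  have hBfin : volume B < ⊤ := measure_ball_lt_top
  have hBvolR : (volume B).toReal = r ^ k * S1 := hballvolR xν r hr0.le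
  have hBpos : 0 < (volume B).toReal := by rw [hBvolR]; positivity
  set c : EReal := ((a ^ (ν - (lam:ℝ)) : ℝ) : EReal) with hcdef
  set E := {y ∈ Ω | c ≤ F y} with hEdef
  have hopen : IsOpen {y ∈ Ω | F y < c} := by
    rw [isOpen_iff_mem_nhds]
    rintro y ⟨hyΩ, hyc⟩
    have h := hF y hyΩ c hyc
    rw [nhdsWithin_eq_nhds.mpr (hΩo.mem_nhds hyΩ)] at h
    filter_upwards [h, hΩo.mem_nhds hyΩ] with z hz1 hz2
    exact ⟨hz2, hz1⟩
  have hEmeas : MeasurableSet E := by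
    have hEq : E = Ω \ {y ∈ Ω | F y < c} := by
      ext y
      simp only [hEdef, mem_setOf_eq, mem_diff, not_and, not_lt]
      constructor
      · rintro ⟨h1, h2⟩; exact ⟨h1, fun _ => h2⟩
      · rintro ⟨h1, h2⟩; exact ⟨h1, h2 h1⟩
    rw [hEq]
    exact hΩo.measurableSet.diff hopen.measurableSet
  obtain ⟨g, hgdef⟩ : ∃ g' : EuclideanSpace ℝ (Fin k) → ℝ,
      g' = fun y => a ^ (ν - (lam:ℝ)) + E.indicator (fun _ => a ^ (ν + 1)) y := ⟨_, rfl⟩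
  have hanl : (0:ℝ) < a ^ (ν - (lam:ℝ)) := Real.rpow_pos_of_pos ha0 _
  have haν1 : (0:ℝ) < a ^ (ν + 1) := Real.rpow_pos_of_pos ha0 _
  have hg0 : ∀ y, 0 ≤ g y := by
    intro y
    have h2 : 0 ≤ E.indicator (fun _ : EuclideanSpace ℝ (Fin k) => a ^ (ν + 1)) y :=
      Set.indicator_nonneg (fun _ _ => haν1.le) y
    simp only [hgdef]
    linarith
  have hgle : ∀ y ∈ B, u y ≤ g y := by
    intro y hyB
    by_cases hyE : y ∈ E
    · have h1 := hcon y (hBsubR hyB)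
      simp only [hgdef, Set.indicator_of_mem hyE]
      linarith
    · simp only [hgdef, Set.indicator_of_notMem hyE, add_zero]
      have hyΩ : y ∈ Ω := hBsubΩ hyB
      have hFy : F y < c := by
        by_contra hcc
        exact hyE ⟨hyΩ, not_lt.mp hcc⟩
      have h5 : (u y : EReal) < ((a ^ (ν - (lam:ℝ)) : ℝ) : EReal) :=
        lt_of_le_of_lt (huF y hyΩ) hFy
      exact (EReal.coe_lt_coe_iff.mp h5).le
  have hcint : IntegrableOn (fun _ : EuclideanSpace ℝ (Fin k) => a ^ (ν - (lam:ℝ))) B :=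
    integrableOn_const hBfin.ne
  have hiint : IntegrableOn (E.indicator (fun _ => a ^ (ν + 1))) B := by
    have hc2 : IntegrableOn (fun _ : EuclideanSpace ℝ (Fin k) => a ^ (ν + 1)) B :=
      integrableOn_const hBfin.ne
    exact hc2.indicator hEmeas
  have hgint : IntegrableOn g B := by
    rw [hgdef]
    simpa [Pi.add_def] using hcint.add hiint
  have hIle : ∫ y in B, u y ≤ ∫ y in B, g y := by
    by_cases hui : IntegrableOn u B
    · exact setIntegral_mono_on hui hgint measurableSet_ball hgle
    · rw [integral_undef hui]
      exact setIntegral_nonneg measurableSet_ball fun y _ => hg0 y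
  have hgval : ∫ y in B, g y
      = a ^ (ν - (lam:ℝ)) * (volume B).toReal + a ^ (ν + 1) * (volume (E ∩ B)).toReal := by
    simp only [hgdef]
    rw [integral_add hcint hiint, setIntegral_const, setIntegral_indicator hEmeas,
      setIntegral_const, Set.inter_comm B E]
    simp only [smul_eq_mul, measureReal_def]
    ring
  have hEB : (volume (E ∩ B)).toReal ≤ μ * r ^ p := by
    have hmem : (volume (E ∩ B)).toReal / r ^ p ∈ muRatioSet Ω F a p (ν - lam) := by
      refine ⟨xν, r, hr0, hBsubΩ, ?_⟩
      rw [hEdef, hcdef, hBdef]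
    have hle := le_csSup hbdd hmem
    have hRp : (0:ℝ) < r ^ p := Real.rpow_pos_of_pos hr0 p
    calc (volume (E ∩ B)).toReal = ((volume (E ∩ B)).toReal / r ^ p) * r ^ p := by
          field_simp
      _ ≤ μ * r ^ p := mul_le_mul_of_nonneg_right hle hRp.le
  have h1 : a ^ ν * (volume B).toReal ≤ ∫ y in B, u y := by
    have h2 : a ^ ν ≤ (volume B).toReal⁻¹ * ∫ y in B, u y := by
      have h3 := le_trans huxν hmean
      rwa [setAverage_eq, smul_eq_mul] at h3
    rw [inv_mul_eq_div] at h2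
    exact (le_div_iff₀ hBpos).mp h2
  have key1 : a ^ ν * (r ^ k * S1)
      ≤ a ^ (ν - (lam:ℝ)) * (r ^ k * S1) + a ^ (ν + 1) * (μ * r ^ p) := by
    have h3 : a ^ (ν+1) * (volume (E ∩ B)).toReal ≤ a ^ (ν+1) * (μ * r ^ p) :=
      mul_le_mul_of_nonneg_left hEB haν1.le
    rw [← hBvolR]
    linarith
  -- final contradiction
  have hDq : 0 < D ^ q := Real.rpow_pos_of_pos hD q
  have haν : (0:ℝ) < a ^ ν := Real.rpow_pos_of_pos ha0 ν
  have hrkS : (0:ℝ) < r ^ k * S1 := by positivity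
  have e2 : a ^ (ν+1) / (D ^ q * S1) ≤ a ^ ν - a ^ (ν - (lam:ℝ)) := by
    have h3 : a ^ (ν - (lam:ℝ)) = a ^ ν * a ^ (-(lam:ℝ)) := by
      rw [← Real.rpow_add ha0]
      ring_nf
    have h4 : a ^ (ν + 1) = a ^ ν * a := by
      rw [Real.rpow_add ha0, Real.rpow_one]
    have h2 : a / (D ^ q * S1) ≤ 1 - a ^ (-(lam:ℝ)) := by linarith [hDlam]
    calc a ^ (ν+1) / (D^q * S1) = a ^ ν * (a / (D^q * S1)) := by rw [h4]; ring
      _ ≤ a ^ ν * (1 - a ^ (-(lam:ℝ))) := mul_le_mul_of_nonneg_left h2 haν.le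
      _ = a ^ ν - a ^ (ν - (lam:ℝ)) := by rw [h3]; ring
  have e1 : (a ^ ν - a ^ (ν - (lam:ℝ))) * (r ^ k * S1) ≤ a ^ (ν+1) * (μ * r ^ p) := by
    nlinarith [key1]
  have e3 : a ^ (ν+1) / (D ^ q * S1) * (r ^ k * S1) ≤ a ^ (ν+1) * (μ * r ^ p) :=
    le_trans (mul_le_mul_of_nonneg_right e2 hrkS.le) e1
  have e4 : a ^ (ν+1) / (D^q * S1) * (r ^ k * S1) = a ^ (ν+1) * (r ^ k / D ^ q) := by
    field_simp
  have e5 : r ^ k / D ^ q ≤ μ * r ^ p := by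
    rw [e4] at e3
    exact (mul_le_mul_iff_right₀ haν1).mp e3
  have e6 : r ^ k ≤ D ^ q * μ * r ^ p := by
    rw [div_le_iff₀ hDq] at e5
    nlinarith [e5]
  have e7 : D ^ q * μ < r ^ q := by
    have hμq : (μ ^ (1/q)) ^ q = μ := by
      rw [← Real.rpow_mul hμnonneg, one_div, inv_mul_cancel₀ hq0.ne', Real.rpow_one]
    have h := Real.rpow_lt_rpow hDμ0 hr1 hq0
    rwa [Real.mul_rpow hD.le (Real.rpow_nonneg hμnonneg _), hμq] at h
  have e8 : r ^ q * r ^ p = (r:ℝ) ^ k := by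
    rw [← Real.rpow_add hr0, ← Real.rpow_natCast r k]
    congr 1
    simp [hp]
  have e9 : D ^ q * μ * r ^ p < r ^ q * r ^ p :=
    mul_lt_mul_of_pos_right e7 (Real.rpow_pos_of_pos hr0 p)
  rw [e8] at e9
  linarith
end
end

section
/- Let k ≥ 2, let 0 < p < k, and let A ⊂ ℝ^k be a nonempty compact set. Suppose there exist p′ ∈ (0,p) and a constant C > 0 such that for every x ∈ A and all 0 < r < R, the set B(x,R) ∩ A can be covered by at most C·(R/r)^{p′} open balls of radius r (that is, the Assouad dimension of A is less than p). Then A is p-admissible: there is a constant C″ such that m([A]_σ ∩ B(x,R)) ≤ C″·σ^{k−p}·R^p for every x ∈ ℝ^k and all R, σ > 0. -/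
open MeasureTheory Metric Set Filter

noncomputable section

/-- Proposition 5.2: a compact set of Assouad dimension < p is
p-admissible. -/
theorem stmt_19 {k : ℕ} (hk : 2 ≤ k)
    (p : ℝ) (hp0 : 0 < p) (hpk : p < (k : ℝ))
    (A : Set (EuclideanSpace ℝ (Fin k))) (hAcomp : IsCompact A) (hAne : A.Nonempty)
    (p' C : ℝ) (hp'0 : 0 < p') (hp'p : p' < p) (hC : 0 < C)
    (hcov : ∀ x ∈ A, ∀ r R : ℝ, 0 < r → r < R →
      ∃ T : Finset (EuclideanSpace ℝ (Fin k)), (T.card : ℝ) ≤ C * (R / r) ^ p' ∧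
        Metric.ball x R ∩ A ⊆ ⋃ c ∈ T, Metric.ball c r) :
    ∃ C'' : ℝ, ∀ (x : EuclideanSpace ℝ (Fin k)) (R σ : ℝ), 0 < R → 0 < σ →
      volume ({y | y ∉ A ∧ 0 < Metric.infDist y A ∧ Metric.infDist y A ≤ σ} ∩ Metric.ball x R)
        ≤ ENNReal.ofReal (C'' * σ ^ ((k : ℝ) - p) * R ^ p) := by
  classical
  haveI : Nonempty (Fin k) := ⟨⟨0, by omega⟩⟩
  haveI : Nontrivial (EuclideanSpace ℝ (Fin k)) := inferInstance
  have hdim : Module.finrank ℝ (EuclideanSpace ℝ (Fin k)) = k := finrank_euclideanSpace_fin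
  set v : ℝ := (volume (Metric.ball (0 : EuclideanSpace ℝ (Fin k)) 1)).toReal with hv
  have hB1 : volume (Metric.ball (0 : EuclideanSpace ℝ (Fin k)) 1) = ENNReal.ofReal v :=
    (ENNReal.ofReal_toReal (measure_ball_lt_top.ne)).symm
  have hv0 : 0 ≤ v := ENNReal.toReal_nonneg
  have hballvol : ∀ (c : EuclideanSpace ℝ (Fin k)) (r : ℝ), 0 ≤ r →
      volume (Metric.ball c r) = ENNReal.ofReal (r ^ k * v) := by
    intro c r hr
    rw [Measure.addHaar_ball _ _ hr, hdim, hB1, ← ENNReal.ofReal_mul (by positivity)]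
  have h4p : (0:ℝ) < (4:ℝ) ^ p' := Real.rpow_pos_of_pos (by norm_num) p'
  refine ⟨v * (1 + C * (4:ℝ) ^ p' * 2 ^ k), fun x R σ hR hσ => ?_⟩
  rcases le_or_gt R σ with hRσ | hσR
  · -- easy case: R ≤ σ, use the whole ball
    calc volume ({y | y ∉ A ∧ 0 < Metric.infDist y A ∧ Metric.infDist y A ≤ σ} ∩ Metric.ball x R)
        ≤ volume (Metric.ball x R) := measure_mono inter_subset_right
      _ = ENNReal.ofReal (R ^ k * v) := hballvol x R hR.le
      _ ≤ ENNReal.ofReal (v * (1 + C * (4:ℝ) ^ p' * 2 ^ k) * σ ^ ((k : ℝ) - p) * R ^ p) := by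
          apply ENNReal.ofReal_le_ofReal
          have h1 : R ^ k ≤ σ ^ ((k:ℝ) - p) * R ^ p := by
            have e : R ^ (k:ℕ) = R ^ ((k:ℝ) - p) * R ^ p := by
              rw [← Real.rpow_natCast R k, ← Real.rpow_add hR]; ring_nf
            rw [e]
            exact mul_le_mul_of_nonneg_right
              (Real.rpow_le_rpow hR.le hRσ (by linarith)) (Real.rpow_nonneg hR.le p)
          have hσR0 : 0 ≤ σ ^ ((k:ℝ) - p) * R ^ p := by positivity
          nlinarith [mul_le_mul_of_nonneg_right h1 hv0,
            mul_nonneg (mul_nonneg (mul_nonneg hC.le h4p.le) (by positivity : (0:ℝ) ≤ (2:ℝ) ^ k)) (mul_nonneg hσR0 hv0)]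
  · -- main case: σ < R
    by_cases hne : ({y | y ∉ A ∧ 0 < Metric.infDist y A ∧ Metric.infDist y A ≤ σ} ∩ Metric.ball x R).Nonempty
    · obtain ⟨y, hy1, hy2⟩ := hne
      obtain ⟨a, haA, hay⟩ := hAcomp.exists_infDist_eq_dist hAne y
      have hya : dist y a ≤ σ := by rw [← hay]; exact hy1.2.2
      have hxa : dist x a < R + σ := by
        have h1 : dist x y < R := by rw [dist_comm]; exact mem_ball.mp hy2
        have := dist_triangle x y a
        linarith
      obtain ⟨T, hTcard, hTcov⟩ := hcov a haA σ (4 * R) hσ (by linarith)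
      have hsub : {y | y ∉ A ∧ 0 < Metric.infDist y A ∧ Metric.infDist y A ≤ σ} ∩ Metric.ball x R
          ⊆ ⋃ c ∈ T, Metric.ball c (2 * σ) := by
        rintro z ⟨hz1, hz2⟩
        obtain ⟨b, hbA, hbz⟩ := hAcomp.exists_infDist_eq_dist hAne z
        have hzb : dist z b ≤ σ := by rw [← hbz]; exact hz1.2.2
        have hzx : dist z x < R := mem_ball.mp hz2
        have hba : dist b a < 4 * R := by
          have := dist_triangle4 b z x a
          have h1 : dist b z = dist z b := dist_comm b z
          linarith
        have hbmem : b ∈ Metric.ball a (4 * R) ∩ A := ⟨mem_ball.mpr hba, hbA⟩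
        obtain ⟨c, hcT, hbc⟩ := by
          have := hTcov hbmem
          simpa only [mem_iUnion, exists_prop, mem_ball] using this
        refine mem_iUnion₂.mpr ⟨c, hcT, mem_ball.mpr ?_⟩
        have := dist_triangle z b c
        linarith
      calc volume ({y | y ∉ A ∧ 0 < Metric.infDist y A ∧ Metric.infDist y A ≤ σ} ∩ Metric.ball x R)
          ≤ volume (⋃ c ∈ T, Metric.ball c (2 * σ)) := measure_mono hsub
        _ ≤ ∑ c ∈ T, volume (Metric.ball c (2 * σ)) := measure_biUnion_finset_le T _
        _ = T.card • ENNReal.ofReal ((2 * σ) ^ k * v) := by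
            rw [Finset.sum_congr rfl (fun c _ => hballvol c (2 * σ) (by positivity)),
              Finset.sum_const]
        _ = (T.card : ENNReal) * ENNReal.ofReal ((2 * σ) ^ k * v) := by
            rw [nsmul_eq_mul]
        _ ≤ ENNReal.ofReal (C * (4 * R / σ) ^ p') * ENNReal.ofReal ((2 * σ) ^ k * v) := by
            apply mul_le_mul_left
            rw [← ENNReal.ofReal_natCast]
            exact ENNReal.ofReal_le_ofReal hTcard
        _ = ENNReal.ofReal (C * (4 * R / σ) ^ p' * ((2 * σ) ^ k * v)) := by
            rw [← ENNReal.ofReal_mul (by positivity)]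
        _ ≤ ENNReal.ofReal (v * (1 + C * (4:ℝ) ^ p' * 2 ^ k) * σ ^ ((k : ℝ) - p) * R ^ p) := by
            apply ENNReal.ofReal_le_ofReal
            have e1 : (4 * R / σ) ^ p' = (4:ℝ) ^ p' * R ^ p' / σ ^ p' := by
              rw [Real.div_rpow (by positivity) hσ.le,
                Real.mul_rpow (by norm_num) hR.le]
            have e2 : σ ^ (k:ℕ) = σ ^ p' * σ ^ ((k:ℝ) - p') := by
              rw [← Real.rpow_natCast σ k, ← Real.rpow_add hσ]; ring_nf
            have core : R ^ p' * σ ^ ((k:ℝ) - p') ≤ R ^ p * σ ^ ((k:ℝ) - p) := by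
              calc R ^ p' * σ ^ ((k:ℝ) - p')
                  = R ^ p' * σ ^ ((k:ℝ) - p) * σ ^ (p - p') := by
                    rw [mul_assoc, ← Real.rpow_add hσ]; ring_nf
                _ ≤ R ^ p' * σ ^ ((k:ℝ) - p) * R ^ (p - p') := by
                    refine mul_le_mul_of_nonneg_left
                      (Real.rpow_le_rpow hσ.le hσR.le (by linarith)) (by positivity)
                _ = R ^ p * σ ^ ((k:ℝ) - p) := by
                    rw [mul_right_comm, ← Real.rpow_add hR]; ring_nf
            have hσp' : (0:ℝ) < σ ^ p' := Real.rpow_pos_of_pos hσ p'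
            have lhs_eq : C * (4 * R / σ) ^ p' * ((2 * σ) ^ k * v)
                = C * (4:ℝ) ^ p' * 2 ^ k * v * (R ^ p' * σ ^ ((k:ℝ) - p')) := by
              rw [e1, mul_pow]
              field_simp
              rw [e2]; ring
            rw [lhs_eq]
            have h2 : C * (4:ℝ) ^ p' * 2 ^ k * v * (R ^ p' * σ ^ ((k:ℝ) - p'))
                ≤ C * (4:ℝ) ^ p' * 2 ^ k * v * (R ^ p * σ ^ ((k:ℝ) - p)) :=
              mul_le_mul_of_nonneg_left core (by positivity)
            have h3 : 0 ≤ v * (σ ^ ((k:ℝ) - p) * R ^ p) := by positivity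
            nlinarith [h2, h3]
    · rw [Set.not_nonempty_iff_eq_empty.mp hne, measure_empty]
      exact zero_le
end
end
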